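/- arXiv:1904.12704 — 10 statements merged into one kernel-verified Lean document; each statement's English description precedes it below -/
import Mathlib

section
/- Discrete Cramér–Rao-type bound: for a pmf p on ℕ with finite second moment and p(i) → 0, letting μ = ∑ i·p(i), σ² = ∑ i²·p(i) − μ², and I_d(p) the discrete Fisher information, one has (σ² + 1/2 − ((μ+1)²/2)·p(0)) · I_d(p) ≥ (1 − (μ+1)·p(0))². -/
open Filter Real

lemma summable_mul_of_sq (f g : ℕ → ℝ) (hf : Summable (fun i => f i ^ 2))
    (hg : Summable (fun i => g i ^ 2)) : Summable (fun i => f i * g i) := by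
  have hle : ∀ i, |f i * g i| ≤ (f i ^ 2 + g i ^ 2) / 2 := by
    intro i
    rw [abs_mul]
    nlinarith [two_mul_le_add_sq |f i| |g i|, sq_abs (f i), sq_abs (g i)]
  have hbig : Summable (fun i => (f i ^ 2 + g i ^ 2) / 2) := (hf.add hg).div_const 2
  exact Summable.of_abs (Summable.of_nonneg_of_le (fun i => abs_nonneg _) hle hbig)

lemma tsum_cauchy_schwarz (f g : ℕ → ℝ) (hf : Summable (fun i => f i ^ 2))
    (hg : Summable (fun i => g i ^ 2)) :
    (∑' i, f i * g i) ^ 2 ≤ (∑' i, f i ^ 2) * (∑' i, g i ^ 2) := by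
  have hfg := summable_mul_of_sq f g hf hg
  have key : ∀ s : Finset ℕ, (∑ i ∈ s, f i * g i) ^ 2 ≤ (∑' i, f i ^ 2) * (∑' i, g i ^ 2) := by
    intro s
    calc (∑ i ∈ s, f i * g i) ^ 2 ≤ (∑ i ∈ s, f i ^ 2) * (∑ i ∈ s, g i ^ 2) :=
          Finset.sum_mul_sq_le_sq_mul_sq s f g
      _ ≤ (∑' i, f i ^ 2) * (∑' i, g i ^ 2) := by
          apply mul_le_mul (Summable.sum_le_tsum s (fun i _ => sq_nonneg _) hf)
            (Summable.sum_le_tsum s (fun i _ => sq_nonneg _) hg)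
            (Finset.sum_nonneg fun i _ => sq_nonneg _) (tsum_nonneg fun i => sq_nonneg _)
  have ht : Tendsto (fun s : Finset ℕ => (∑ i ∈ s, f i * g i) ^ 2) atTop
      (nhds ((∑' i, f i * g i) ^ 2)) := hfg.hasSum.pow 2
  exact le_of_tendsto' ht key

set_option maxHeartbeats 1000000 in
theorem discrete_cramer_rao (p : ℕ → ℝ) (hp : ∀ i, 0 ≤ p i)
    (hsum : ∑' i, p i = 1) (hmom : Summable (fun i : ℕ => (i : ℝ) ^ 2 * p i))
    (htend : Tendsto p atTop (nhds 0))
    (μ σ2 : ℝ) (hμ : μ = ∑' i : ℕ, (i : ℝ) * p i)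
    (hσ : σ2 = (∑' i : ℕ, (i : ℝ) ^ 2 * p i) - μ ^ 2) :
    (σ2 + 1 / 2 - ((μ + 1) ^ 2 / 2) * p 0) *
        (4 * ∑' i : ℕ, (Real.sqrt (p (i + 1)) - Real.sqrt (p i)) ^ 2) ≥
      (1 - (μ + 1) * p 0) ^ 2 := by
  -- basic summability
  have hq1 : Summable (fun i : ℕ => ((i + 1 : ℕ) : ℝ) ^ 2 * p (i + 1)) :=
    (summable_nat_add_iff 1).2 hmom
  have hq : Summable (fun i : ℕ => p (i + 1)) := by
    apply Summable.of_nonneg_of_le (fun i => hp _) _ hq1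
    intro i
    have h1 : (1 : ℝ) ≤ ((i + 1 : ℕ) : ℝ) ^ 2 := by
      have : (1 : ℝ) ≤ ((i + 1 : ℕ) : ℝ) := by exact_mod_cast Nat.one_le_iff_ne_zero.2 (by omega)
      nlinarith
    nlinarith [hp (i + 1)]
  have hps : Summable p := (summable_nat_add_iff 1).1 hq
  have hip : Summable (fun i : ℕ => (i : ℝ) * p i) := by
    apply Summable.of_nonneg_of_le (fun i => mul_nonneg (Nat.cast_nonneg i) (hp i)) _ hmom
    intro i
    rcases Nat.eq_zero_or_pos i with h | h
    · simp [h]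
    · have h1 : (1 : ℝ) ≤ (i : ℝ) := by exact_mod_cast h
      nlinarith [hp i, mul_nonneg (hp i) (sub_nonneg.2 h1)]
  have hipm : Summable (fun i : ℕ => ((i : ℝ) - μ) * p i) :=
    (hip.sub (hps.mul_left μ)).congr (fun i => by ring)
  have hsqm : Summable (fun i : ℕ => ((i : ℝ) - μ) ^ 2 * p i) :=
    ((hmom.sub (hip.mul_left (2 * μ))).add (hps.mul_left (μ ^ 2))).congr (fun i => by ring)
  have hGsq : Summable (fun j : ℕ => ((j : ℝ) - 1 - μ) ^ 2 * p j) :=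
    ((hmom.sub (hip.mul_left (2 * (1 + μ)))).add (hps.mul_left ((1 + μ) ^ 2))).congr
      (fun j => by ring)
  have hG1 : Summable (fun j : ℕ => ((j : ℝ) - 1 - μ) * p j) :=
    (hip.sub (hps.mul_left (1 + μ))).congr (fun j => by ring)
  have hsqm' : Summable (fun i : ℕ => ((i : ℝ) - μ) ^ 2 * p (i + 1)) :=
    ((summable_nat_add_iff 1).2 hGsq).congr (fun i => by push_cast; ring_nf)
  have h1m' : Summable (fun i : ℕ => ((i : ℝ) - μ) * p (i + 1)) :=
    ((summable_nat_add_iff 1).2 hG1).congr (fun i => by push_cast; ring_nf)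
  -- tsum values
  have tsq : ∑' i : ℕ, (i : ℝ) ^ 2 * p i = σ2 + μ ^ 2 := by linarith
  have tS2 : ∑' i : ℕ, ((i : ℝ) - μ) ^ 2 * p i = σ2 := by
    calc ∑' i : ℕ, ((i : ℝ) - μ) ^ 2 * p i
        = ∑' i : ℕ, ((i : ℝ) ^ 2 * p i - 2 * μ * ((i : ℝ) * p i) + μ ^ 2 * p i) :=
          tsum_congr (fun i => by ring)
      _ = ((∑' i : ℕ, (i : ℝ) ^ 2 * p i) - ∑' i : ℕ, 2 * μ * ((i : ℝ) * p i))
            + ∑' i : ℕ, μ ^ 2 * p i := by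
          rw [Summable.tsum_add (hmom.sub (hip.mul_left (2 * μ))) (hps.mul_left (μ ^ 2)),
            Summable.tsum_sub hmom (hip.mul_left (2 * μ))]
      _ = σ2 := by rw [tsum_mul_left, tsum_mul_left, hsum, ← hμ, hσ]; ring
  have tG : ∑' j : ℕ, ((j : ℝ) - 1 - μ) ^ 2 * p j = σ2 + 1 := by
    calc ∑' j : ℕ, ((j : ℝ) - 1 - μ) ^ 2 * p j
        = ∑' j : ℕ, ((j : ℝ) ^ 2 * p j - 2 * (1 + μ) * ((j : ℝ) * p j) + (1 + μ) ^ 2 * p j) :=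
          tsum_congr (fun j => by ring)
      _ = ((∑' j : ℕ, (j : ℝ) ^ 2 * p j) - ∑' j : ℕ, 2 * (1 + μ) * ((j : ℝ) * p j))
            + ∑' j : ℕ, (1 + μ) ^ 2 * p j := by
          rw [Summable.tsum_add (hmom.sub (hip.mul_left (2 * (1 + μ)))) (hps.mul_left ((1 + μ) ^ 2)),
            Summable.tsum_sub hmom (hip.mul_left (2 * (1 + μ)))]
      _ = σ2 + 1 := by rw [tsum_mul_left, tsum_mul_left, hsum, ← hμ, hσ]; ring
  have tT : ∑' i : ℕ, ((i : ℝ) - μ) ^ 2 * p (i + 1) = σ2 + 1 - (1 + μ) ^ 2 * p 0 := by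
    have h0 := Summable.tsum_eq_zero_add hGsq
    have hsh : ∑' i : ℕ, (((i + 1 : ℕ) : ℝ) - 1 - μ) ^ 2 * p (i + 1)
        = ∑' i : ℕ, ((i : ℝ) - μ) ^ 2 * p (i + 1) :=
      tsum_congr (fun i => by push_cast; ring_nf)
    rw [hsh] at h0
    rw [tG] at h0
    have : ((0 : ℕ) : ℝ) = 0 := by norm_num
    rw [this] at h0
    nlinarith [h0]
  have tH : ∑' j : ℕ, ((j : ℝ) - 1 - μ) * p j = -1 := by
    calc ∑' j : ℕ, ((j : ℝ) - 1 - μ) * p j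
        = ∑' j : ℕ, ((j : ℝ) * p j - (1 + μ) * p j) := tsum_congr (fun j => by ring)
      _ = (∑' j : ℕ, (j : ℝ) * p j) - ∑' j : ℕ, (1 + μ) * p j :=
          Summable.tsum_sub hip (hps.mul_left (1 + μ))
      _ = -1 := by rw [tsum_mul_left, hsum, ← hμ]; ring
  have t1' : ∑' i : ℕ, ((i : ℝ) - μ) * p (i + 1) = (1 + μ) * p 0 - 1 := by
    have h0 := Summable.tsum_eq_zero_add hG1
    have hsh : ∑' i : ℕ, (((i + 1 : ℕ) : ℝ) - 1 - μ) * p (i + 1)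
        = ∑' i : ℕ, ((i : ℝ) - μ) * p (i + 1) :=
      tsum_congr (fun i => by push_cast; ring_nf)
    rw [hsh, tH] at h0
    have : ((0 : ℕ) : ℝ) = 0 := by norm_num
    rw [this] at h0
    linarith [h0]
  have t1 : ∑' i : ℕ, ((i : ℝ) - μ) * p i = 0 := by
    calc ∑' i : ℕ, ((i : ℝ) - μ) * p i
        = ∑' i : ℕ, ((i : ℝ) * p i - μ * p i) := tsum_congr (fun i => by ring)
      _ = (∑' i : ℕ, (i : ℝ) * p i) - ∑' i : ℕ, μ * p i := Summable.tsum_sub hip (hps.mul_left μ)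
      _ = 0 := by rw [tsum_mul_left, hsum, ← hμ]; ring
  -- the two sequences for Cauchy-Schwarz
  set A : ℕ → ℝ := fun i => Real.sqrt (p (i + 1)) - Real.sqrt (p i) with hA
  set B : ℕ → ℝ := fun i => ((i : ℝ) - μ) * (Real.sqrt (p (i + 1)) + Real.sqrt (p i)) with hB
  have hA2 : Summable (fun i => A i ^ 2) := by
    apply Summable.of_nonneg_of_le (fun i => sq_nonneg _) _ ((hq.mul_left 2).add (hps.mul_left 2))
    · intro i
      have ha := Real.sq_sqrt (hp (i + 1))
      have hb := Real.sq_sqrt (hp i)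
      simp only [hA]
      nlinarith [sq_nonneg (Real.sqrt (p (i + 1)) + Real.sqrt (p i))]
  have hB2le : ∀ i, B i ^ 2 ≤ 2 * (((i : ℝ) - μ) ^ 2 * p (i + 1)) + 2 * (((i : ℝ) - μ) ^ 2 * p i) := by
    intro i
    have ha := Real.sq_sqrt (hp (i + 1))
    have hb := Real.sq_sqrt (hp i)
    simp only [hB]
    nlinarith [mul_nonneg (sq_nonneg ((i : ℝ) - μ))
      (sq_nonneg (Real.sqrt (p (i + 1)) - Real.sqrt (p i)))]
  have hmajB : Summable (fun i : ℕ => 2 * (((i : ℝ) - μ) ^ 2 * p (i + 1)) + 2 * (((i : ℝ) - μ) ^ 2 * p i)) :=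
    (hsqm'.mul_left 2).add (hsqm.mul_left 2)
  have hB2 : Summable (fun i => B i ^ 2) :=
    Summable.of_nonneg_of_le (fun i => sq_nonneg _) hB2le hmajB
  -- bound on the tsum of B^2
  have hIB : ∑' i, B i ^ 2 ≤ 2 * (σ2 + 1 - (1 + μ) ^ 2 * p 0) + 2 * σ2 := by
    calc ∑' i, B i ^ 2
        ≤ ∑' i : ℕ, (2 * (((i : ℝ) - μ) ^ 2 * p (i + 1)) + 2 * (((i : ℝ) - μ) ^ 2 * p i)) :=
          Summable.tsum_le_tsum hB2le hB2 hmajB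
      _ = 2 * (σ2 + 1 - (1 + μ) ^ 2 * p 0) + 2 * σ2 := by
          rw [Summable.tsum_add (hsqm'.mul_left 2) (hsqm.mul_left 2), tsum_mul_left, tsum_mul_left,
            tT, tS2]
  -- value of sum of B*A
  have hS : ∑' i, B i * A i = (1 + μ) * p 0 - 1 := by
    calc ∑' i, B i * A i
        = ∑' i : ℕ, (((i : ℝ) - μ) * p (i + 1) - ((i : ℝ) - μ) * p i) := by
          apply tsum_congr
          intro i
          have ha := Real.sq_sqrt (hp (i + 1))
          have hb := Real.sq_sqrt (hp i)
          simp only [hA, hB]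
          linear_combination ((i : ℝ) - μ) * ha - ((i : ℝ) - μ) * hb
      _ = (∑' i : ℕ, ((i : ℝ) - μ) * p (i + 1)) - ∑' i : ℕ, ((i : ℝ) - μ) * p i :=
          Summable.tsum_sub h1m' hipm
      _ = (1 + μ) * p 0 - 1 := by rw [t1', t1]; ring
  have hCS := tsum_cauchy_schwarz B A hB2 hA2
  have hIA0 : 0 ≤ ∑' i, A i ^ 2 := tsum_nonneg fun i => sq_nonneg _
  rw [hS] at hCS
  have key : ((1 + μ) * p 0 - 1) ^ 2 ≤
      (2 * (σ2 + 1 - (1 + μ) ^ 2 * p 0) + 2 * σ2) * ∑' i, A i ^ 2 :=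
    hCS.trans (mul_le_mul_of_nonneg_right hIB hIA0)
  have : (∑' i : ℕ, (Real.sqrt (p (i + 1)) - Real.sqrt (p i)) ^ 2) = ∑' i, A i ^ 2 := rfl
  rw [ge_iff_le, this]
  nlinarith [key]
end

section
/- Equality case of the discrete Cramér–Rao-type bound: for a pmf p on ℕ with finite second moment and p(i) → 0, equality (σ² + 1/2 − ((μ+1)²/2)·p(0)) · I_d(p) = (1 − (μ+1)·p(0))² holds if and only if p(i) = δ_{i0} (i.e., p(0) = 1 and p(i) = 0 for i ≥ 1). -/
/-!
Put `w i = i - μ`. Summation by parts gives `T := ∑ w i (p (i+1) - p i) = (μ + 1) p 0 - 1` and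
`W := ∑ w i² (p (i+1) + p i) = 2σ² + 1 - (μ + 1)² p 0`. Factor
`p (i+1) - p i = (√p (i+1) + √p i)(√p (i+1) - √p i)` and apply Cauchy–Schwarz; since
`(a + b)² = 2(a² + b²) - (a - b)²`, this yields `T² + A D ≤ 2 A W`, where `A = I_d(p) / 4` and
`D = ∑ (w i (√p (i+1) - √p i))²`. So equality forces `A D = 0`, i.e. `p (i+1) = p i` whenever
`i ≠ μ`. Then `p → 0` kills all mass above `μ`; a law with no mass above its mean is concentrated
at its mean, and `p (i+1) = p i` for `i ≠ μ` leaves only the point `0`.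
-/

open Filter Real

theorem tsum_mul_sq_le_sq_mul_sq {ι : Type*} {u v : ι → ℝ} (hu : Summable fun i => u i ^ 2)
    (hv : Summable fun i => v i ^ 2) :
    (∑' i, u i * v i) ^ 2 ≤ (∑' i, u i ^ 2) * ∑' i, v i ^ 2 := by
  have huv : Summable fun i => u i * v i :=
    .of_norm_bounded ((hu.add hv).div_const 2) fun i => by
      rw [Real.norm_eq_abs, abs_mul]
      nlinarith [sq_nonneg (|u i| - |v i|), sq_abs (u i), sq_abs (v i)]
  refine le_of_tendsto' (huv.hasSum.pow 2) fun s => ?_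
  calc (∑ i ∈ s, u i * v i) ^ 2 ≤ (∑ i ∈ s, u i ^ 2) * ∑ i ∈ s, v i ^ 2 :=
        Finset.sum_mul_sq_le_sq_mul_sq s u v
    _ ≤ _ := mul_le_mul (hu.sum_le_tsum s fun i _ => sq_nonneg _)
        (hv.sum_le_tsum s fun i _ => sq_nonneg _) (Finset.sum_nonneg fun i _ => sq_nonneg _)
        (tsum_nonneg fun i => sq_nonneg _)

theorem sq_sqrt_add_add_sq_sqrt_sub {x y : ℝ} (hx : 0 ≤ x) (hy : 0 ≤ y) :
    (√x + √y) ^ 2 + (√x - √y) ^ 2 = 2 * (x + y) := by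
  linear_combination 2 * sq_sqrt hx + 2 * sq_sqrt hy

theorem Summable.eq_zero_of_tsum_eq_zero {ι : Type*} {f : ι → ℝ} (hf : Summable f)
    (hf0 : ∀ i, 0 ≤ f i) (h : ∑' i, f i = 0) (i : ι) : f i = 0 :=
  congrFun ((hasSum_zero_iff_of_nonneg hf0).1 (h ▸ hf.hasSum)) i

section Moments

variable {p : ℕ → ℝ} {μ : ℝ}

theorem summable_natCast_mul_of_summable_sq_mul (hp : ∀ i, 0 ≤ p i)
    (h2 : Summable fun i : ℕ => (i : ℝ) ^ 2 * p i) : Summable fun i : ℕ => (i : ℝ) * p i :=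
  h2.of_nonneg_of_le (fun i => mul_nonneg i.cast_nonneg (hp i)) fun i =>
    mul_le_mul_of_nonneg_right (mod_cast Nat.le_self_pow two_ne_zero i) (hp i)

theorem HasSum.shift_mul {g : ℝ → ℝ} {a : ℝ} (h : HasSum (fun i : ℕ => g i * p i) a) :
    HasSum (fun i : ℕ => g (i + 1) * p (i + 1)) (a - g 0 * p 0) := by
  simpa using (hasSum_nat_add_iff' 1).2 h

theorem hasSum_sub_mul (h0 : HasSum p 1) (h1 : HasSum (fun i : ℕ => (i : ℝ) * p i) μ) (c : ℝ) :
    HasSum (fun i : ℕ => ((i : ℝ) - c) * p i) (μ - c) := by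
  simpa [sub_mul] using h1.sub (h0.mul_left c)

theorem hasSum_sub_sq_mul (h0 : HasSum p 1) (h1 : HasSum (fun i : ℕ => (i : ℝ) * p i) μ) {m : ℝ}
    (h2 : HasSum (fun i : ℕ => (i : ℝ) ^ 2 * p i) m) (c : ℝ) :
    HasSum (fun i : ℕ => ((i : ℝ) - c) ^ 2 * p i) (m - 2 * c * μ + c ^ 2) := by
  convert! (h2.sub (h1.mul_left (2 * c))).add (h0.mul_left (c ^ 2)) using 1
  · funext i; ring
  · ring

theorem hasSum_sub_mul_succ_sub (h0 : HasSum p 1) (h1 : HasSum (fun i : ℕ => (i : ℝ) * p i) μ) :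
    HasSum (fun i : ℕ => ((i : ℝ) - μ) * (p (i + 1) - p i)) ((μ + 1) * p 0 - 1) := by
  have hshift := HasSum.shift_mul (g := fun x => x - (μ + 1)) (hasSum_sub_mul h0 h1 (μ + 1))
  convert! hshift.sub (hasSum_sub_mul h0 h1 μ) using 1
  · funext i; ring
  · ring

theorem hasSum_sub_sq_mul_succ_add (h0 : HasSum p 1) (h1 : HasSum (fun i : ℕ => (i : ℝ) * p i) μ)
    {m : ℝ} (h2 : HasSum (fun i : ℕ => (i : ℝ) ^ 2 * p i) m) :
    HasSum (fun i : ℕ => ((i : ℝ) - μ) ^ 2 * (p (i + 1) + p i))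
      (2 * (m - μ ^ 2) + 1 - (μ + 1) ^ 2 * p 0) := by
  have hshift :=
    HasSum.shift_mul (g := fun x => (x - (μ + 1)) ^ 2) (hasSum_sub_sq_mul h0 h1 h2 (μ + 1))
  convert! hshift.add (hasSum_sub_sq_mul h0 h1 h2 μ) using 1
  · funext i; ring
  · ring

end Moments

section SqrtIncrements

variable {p w : ℕ → ℝ}

theorem summable_mul_sqrt_succ_sub_sqrt_sq (hp : ∀ i, 0 ≤ p i)
    (hW : Summable fun i => w i ^ 2 * (p (i + 1) + p i)) :
    Summable fun i => (w i * (√(p (i + 1)) - √(p i))) ^ 2 :=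
  (hW.mul_left 2).of_nonneg_of_le (fun i => sq_nonneg _) fun i => by
    have := sq_sqrt_add_add_sq_sqrt_sub (hp (i + 1)) (hp i)
    rw [mul_pow]
    nlinarith [sq_nonneg (w i), sq_nonneg (√(p (i + 1)) + √(p i))]

theorem summable_sqrt_succ_sub_sqrt_sq (hp : ∀ i, 0 ≤ p i) (hps : Summable p) :
    Summable fun i => (√(p (i + 1)) - √(p i)) ^ 2 := by
  simpa using summable_mul_sqrt_succ_sub_sqrt_sq (w := 1) hp
    (by simpa using ((summable_nat_add_iff 1).2 hps).add hps)

theorem sq_tsum_mul_sub_add_mul_le (hp : ∀ i, 0 ≤ p i) (hps : Summable p)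
    (hW : Summable fun i => w i ^ 2 * (p (i + 1) + p i)) :
    (∑' i, w i * (p (i + 1) - p i)) ^ 2 +
        (∑' i, (√(p (i + 1)) - √(p i)) ^ 2) * ∑' i, (w i * (√(p (i + 1)) - √(p i))) ^ 2 ≤
      2 * (∑' i, (√(p (i + 1)) - √(p i)) ^ 2) * ∑' i, w i ^ 2 * (p (i + 1) + p i) := by
  have hD := summable_mul_sqrt_succ_sub_sqrt_sq hp hW
  have hpoint (i : ℕ) : (w i * (√(p (i + 1)) + √(p i))) ^ 2 =
      2 * (w i ^ 2 * (p (i + 1) + p i)) - (w i * (√(p (i + 1)) - √(p i))) ^ 2 := by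
    linear_combination w i ^ 2 * sq_sqrt_add_add_sq_sqrt_sub (hp (i + 1)) (hp i)
  have hU : ∑' i, (w i * (√(p (i + 1)) + √(p i))) ^ 2 =
      2 * ∑' i, w i ^ 2 * (p (i + 1) + p i) - ∑' i, (w i * (√(p (i + 1)) - √(p i))) ^ 2 := by
    rw [tsum_congr hpoint, (hW.mul_left 2).tsum_sub hD, tsum_mul_left]
  have hT : ∑' i, w i * (p (i + 1) - p i) =
      ∑' i, w i * (√(p (i + 1)) + √(p i)) * (√(p (i + 1)) - √(p i)) :=
    tsum_congr fun i => by
      linear_combination w i * (sq_sqrt (hp i) - sq_sqrt (hp (i + 1)))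
  have hCS := tsum_mul_sq_le_sq_mul_sq (((hW.mul_left 2).sub hD).congr fun i => (hpoint i).symm)
    (summable_sqrt_succ_sub_sqrt_sq hp hps)
  rw [← hT, hU] at hCS
  linarith

theorem succ_eq_of_sq_tsum_mul_sub_eq (hp : ∀ i, 0 ≤ p i) (hps : Summable p)
    (hW : Summable fun i => w i ^ 2 * (p (i + 1) + p i))
    (heq : (∑' i, w i * (p (i + 1) - p i)) ^ 2 =
      2 * (∑' i, (√(p (i + 1)) - √(p i)) ^ 2) * ∑' i, w i ^ 2 * (p (i + 1) + p i))
    {i : ℕ} (hi : w i ≠ 0) : p (i + 1) = p i := by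
  have hA := summable_sqrt_succ_sub_sqrt_sq hp hps
  have hD := summable_mul_sqrt_succ_sub_sqrt_sq hp hW
  have hAD : (∑' i, (√(p (i + 1)) - √(p i)) ^ 2) * ∑' i, (w i * (√(p (i + 1)) - √(p i))) ^ 2 = 0 :=
    le_antisymm (by linarith [sq_tsum_mul_sub_add_mul_le hp hps hW])
      (mul_nonneg (tsum_nonneg fun _ => sq_nonneg _) (tsum_nonneg fun _ => sq_nonneg _))
  have hzero : (√(p (i + 1)) - √(p i)) ^ 2 = 0 := by
    rcases mul_eq_zero.1 hAD with hA0 | hD0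
    · exact hA.eq_zero_of_tsum_eq_zero (fun _ => sq_nonneg _) hA0 i
    · simpa [mul_pow, hi] using hD.eq_zero_of_tsum_eq_zero (fun _ => sq_nonneg _) hD0 i
  rwa [sq_eq_zero_iff, sub_eq_zero, sqrt_inj (hp _) (hp _)] at hzero

end SqrtIncrements

section Support

variable {p : ℕ → ℝ} {μ : ℝ}

theorem eq_zero_of_tendsto_zero_of_succ_eq (htend : Tendsto p atTop (nhds 0)) {m : ℕ}
    (h : ∀ i ≥ m, p (i + 1) = p i) : p m = 0 := by
  have hconst : ∀ i ≥ m, p i = p m := fun i hi => by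
    induction i, hi using Nat.le_induction with
    | base => rfl
    | succ i hi ih => rw [h i hi, ih]
  exact tendsto_nhds_unique
    (tendsto_const_nhds.congr' (eventually_atTop.2 ⟨m, fun i hi => (hconst i hi).symm⟩)) htend

theorem eq_zero_of_ne_mean (hp : ∀ i, 0 ≤ p i) (h0 : HasSum p 1)
    (h1 : HasSum (fun i : ℕ => (i : ℝ) * p i) μ) (habove : ∀ i : ℕ, μ < i → p i = 0)
    {i : ℕ} (hi : (i : ℝ) ≠ μ) : p i = 0 := by
  have hdev : HasSum (fun i : ℕ => (μ - i) * p i) 0 := by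
    convert! (h0.mul_left μ).sub h1 using 1
    · funext i; ring
    · ring
  have hdev0 : ∀ j : ℕ, 0 ≤ (μ - j) * p j := fun j => by
    rcases le_or_gt (j : ℝ) μ with hj | hj
    · exact mul_nonneg (sub_nonneg.2 hj) (hp j)
    · simp [habove j hj]
  have hterm := congrFun ((hasSum_zero_iff_of_nonneg hdev0).1 hdev) i
  exact (mul_eq_zero.1 hterm).resolve_left (sub_ne_zero.2 hi.symm)

theorem eq_ite_zero_of_succ_eq (hp : ∀ i, 0 ≤ p i) (h0 : HasSum p 1)
    (h1 : HasSum (fun i : ℕ => (i : ℝ) * p i) μ) (htend : Tendsto p atTop (nhds 0))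
    (hsucc : ∀ i : ℕ, (i : ℝ) ≠ μ → p (i + 1) = p i) (i : ℕ) :
    p i = if i = 0 then 1 else 0 := by
  have hoff : ∀ {i : ℕ}, (i : ℝ) ≠ μ → p i = 0 :=
    eq_zero_of_ne_mean hp h0 h1 fun i hi => eq_zero_of_tendsto_zero_of_succ_eq htend
      fun j hj => hsucc j (hi.trans_le (Nat.cast_le.2 hj)).ne'
  have hsucc0 (j : ℕ) : p (j + 1) = 0 := by
    by_cases hj : (j : ℝ) = μ
    · exact hoff (by push_cast; linarith)
    · rw [hsucc j hj, hoff hj]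
  have hp0 : p 0 = 1 := (hasSum_single 0 fun j hj => by
    obtain ⟨k, rfl⟩ := Nat.exists_eq_succ_of_ne_zero hj
    exact hsucc0 k).unique h0
  rcases i with _ | i
  · simp [hp0]
  · simp [hsucc0]

end Support

theorem discrete_cramer_rao_equality (p : ℕ → ℝ) (hp : ∀ i, 0 ≤ p i)
    (hsum : ∑' i, p i = 1) (hmom : Summable (fun i : ℕ => (i : ℝ) ^ 2 * p i))
    (htend : Tendsto p atTop (nhds 0))
    (μ σ2 : ℝ) (hμ : μ = ∑' i : ℕ, (i : ℝ) * p i)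
    (hσ : σ2 = (∑' i : ℕ, (i : ℝ) ^ 2 * p i) - μ ^ 2) :
    (σ2 + 1 / 2 - ((μ + 1) ^ 2 / 2) * p 0) *
        (4 * ∑' i : ℕ, (Real.sqrt (p (i + 1)) - Real.sqrt (p i)) ^ 2) =
      (1 - (μ + 1) * p 0) ^ 2 ↔ ∀ i, p i = if i = 0 then 1 else 0 := by
  constructor
  · intro heq
    have hps : Summable p := by
      by_contra h
      simp [tsum_eq_zero_of_not_summable h] at hsum
    have h0 : HasSum p 1 := hsum ▸ hps.hasSum
    have h1 : HasSum (fun i : ℕ => (i : ℝ) * p i) μ :=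
      hμ ▸ (summable_natCast_mul_of_summable_sq_mul hp hmom).hasSum
    have hT := hasSum_sub_mul_succ_sub h0 h1
    have hW := hasSum_sub_sq_mul_succ_add h0 h1 hmom.hasSum
    refine eq_ite_zero_of_succ_eq hp h0 h1 htend fun i hi =>
      succ_eq_of_sq_tsum_mul_sub_eq hp hps hW.summable ?_ (sub_ne_zero.2 hi)
    rw [hT.tsum_eq, hW.tsum_eq, ← hσ]
    linear_combination -heq
  · intro hδ
    obtain rfl : p = fun i => if i = 0 then 1 else 0 := funext hδ
    simp only [mul_ite, mul_one, mul_zero, tsum_ite_eq] at hμ hσ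
    simp [hμ, hσ]
end

section
/- For a pmf p on ℕ with p(0) = 0, finite second moment, and p(i) → 0, the simplified discrete Cramér–Rao bound holds: (σ² + 1/2) · I_d(p) ≥ 1. -/
open Filter Real

lemma abs_mul_le_half (x y : ℝ) : |x * y| ≤ 1/2 * (x ^ 2 + y ^ 2) := by
  rw [abs_mul]
  have h1 := two_mul_le_add_sq |x| |y|
  rw [sq_abs, sq_abs] at h1
  nlinarith [h1]

/-- Cauchy–Schwarz for tsum over ℕ. -/
lemma tsum_cs (f g : ℕ → ℝ) (hf : Summable (fun i => f i ^ 2))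
    (hg : Summable (fun i => g i ^ 2)) :
    (∑' i, f i * g i) ^ 2 ≤ (∑' i, f i ^ 2) * ∑' i, g i ^ 2 := by
  set A := ∑' i, f i ^ 2 with hA
  set B := ∑' i, g i ^ 2 with hB
  have hA0 : 0 ≤ A := tsum_nonneg fun i => sq_nonneg _
  have hB0 : 0 ≤ B := tsum_nonneg fun i => sq_nonneg _
  have habs : Summable (fun i => |f i * g i|) := by
    apply Summable.of_nonneg_of_le (fun i => abs_nonneg _)
      (fun i => ?_) ((hf.add hg).mul_left (1/2 : ℝ))
    have := abs_mul (f i) (g i)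
    have h1 : |f i| ^ 2 = f i ^ 2 := sq_abs _
    have h2 : |g i| ^ 2 = g i ^ 2 := sq_abs _
    nlinarith [sq_nonneg (|f i| - |g i|), abs_nonneg (f i), abs_nonneg (g i)]
  have hfg : Summable (fun i => f i * g i) := habs.of_abs
  have key : ∑' i, |f i * g i| ≤ Real.sqrt A * Real.sqrt B := by
    apply Summable.tsum_le_of_sum_le habs
    intro s
    have h1 : (∑ i ∈ s, |f i| * |g i|) ^ 2 ≤ (∑ i ∈ s, |f i| ^ 2) * ∑ i ∈ s, |g i| ^ 2 :=
      Finset.sum_mul_sq_le_sq_mul_sq s _ _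
    have h2 : (∑ i ∈ s, |f i| ^ 2) ≤ A := by
      simp only [sq_abs]
      exact Summable.sum_le_tsum s (fun i _ => sq_nonneg _) hf
    have h3 : (∑ i ∈ s, |g i| ^ 2) ≤ B := by
      simp only [sq_abs]
      exact Summable.sum_le_tsum s (fun i _ => sq_nonneg _) hg
    have h4 : (∑ i ∈ s, |f i * g i|) ^ 2 ≤ A * B := by
      simp only [abs_mul]
      refine h1.trans ?_
      have : (0:ℝ) ≤ ∑ i ∈ s, |f i| ^ 2 := Finset.sum_nonneg fun i _ => sq_nonneg _
      have : (0:ℝ) ≤ ∑ i ∈ s, |g i| ^ 2 := Finset.sum_nonneg fun i _ => sq_nonneg _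
      nlinarith
    have h5 : (0:ℝ) ≤ ∑ i ∈ s, |f i * g i| := Finset.sum_nonneg fun i _ => abs_nonneg _
    calc ∑ i ∈ s, |f i * g i| = Real.sqrt ((∑ i ∈ s, |f i * g i|)^2) := by
            rw [Real.sqrt_sq h5]
      _ ≤ Real.sqrt (A * B) := Real.sqrt_le_sqrt h4
      _ = Real.sqrt A * Real.sqrt B := Real.sqrt_mul hA0 _
  have habs2 : |∑' i, f i * g i| ≤ Real.sqrt A * Real.sqrt B := by
    have h1 : |∑' i, f i * g i| ≤ ∑' i, |f i * g i| := by
      have h2 := norm_tsum_le_tsum_norm (f := fun i => f i * g i)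
          (by simpa only [Real.norm_eq_abs] using habs)
      simpa only [Real.norm_eq_abs] using h2
    exact h1.trans key
  calc (∑' i, f i * g i) ^ 2 = |∑' i, f i * g i| ^ 2 := (sq_abs _).symm
    _ ≤ (Real.sqrt A * Real.sqrt B) ^ 2 := by
        apply pow_le_pow_left₀ (abs_nonneg _) habs2
    _ = A * B := by
        rw [mul_pow, Real.sq_sqrt hA0, Real.sq_sqrt hB0]

theorem discrete_cramer_rao_simple (p : ℕ → ℝ) (hp : ∀ i, 0 ≤ p i)
    (hsum : ∑' i, p i = 1) (h0 : p 0 = 0)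
    (hmom : Summable (fun i : ℕ => (i : ℝ) ^ 2 * p i))
    (htend : Tendsto p atTop (nhds 0))
    (σ2 : ℝ)
    (hσ : σ2 = (∑' i : ℕ, (i : ℝ) ^ 2 * p i) - (∑' i : ℕ, (i : ℝ) * p i) ^ 2) :
    (σ2 + 1 / 2) * (4 * ∑' i : ℕ, (Real.sqrt (p (i + 1)) - Real.sqrt (p i)) ^ 2) ≥ 1 := by
  -- basic summabilities
  have hS : Summable p := by
    by_contra h
    rw [tsum_eq_zero_of_not_summable h] at hsum
    norm_num at hsum
  have hle1 : ∀ i : ℕ, (i:ℝ) * p i ≤ (i:ℝ)^2 * p i := by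
    intro i
    rcases Nat.eq_zero_or_pos i with h | h
    · simp [h]
    · have h1 : (1:ℝ) ≤ i := by exact_mod_cast h
      have h2 : (i:ℝ) ≤ (i:ℝ)^2 := by nlinarith
      exact mul_le_mul_of_nonneg_right h2 (hp i)
  have hS1 : Summable (fun i : ℕ => (i:ℝ) * p i) :=
    Summable.of_nonneg_of_le (fun i => mul_nonneg (Nat.cast_nonneg i) (hp i)) hle1 hmom
  set μ := ∑' i : ℕ, (i:ℝ) * p i with hμ
  set q : ℕ → ℝ := fun i => Real.sqrt (p i) with hq
  have hq2 : ∀ i, q i ^ 2 = p i := fun i => Real.sq_sqrt (hp i)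
  -- summability of centered second moments
  have hV : Summable (fun i : ℕ => ((i:ℝ) - μ)^2 * p i) := by
    have : (fun i : ℕ => ((i:ℝ) - μ)^2 * p i)
        = fun i : ℕ => ((i:ℝ)^2 * p i) - (2*μ) * ((i:ℝ) * p i) + μ^2 * p i := by
      funext i; ring
    rw [this]
    exact ((hmom.sub ((hS1.mul_left (2*μ)))).add (hS.mul_left (μ^2)))
  have hVs : Summable (fun i : ℕ => ((i:ℝ)+1 - μ)^2 * p (i+1)) := by
    have := (summable_nat_add_iff (f := fun i : ℕ => ((i:ℝ) - μ)^2 * p i) 1).mpr hV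
    apply this.congr
    intro i; push_cast; ring_nf
  have hW : Summable (fun i : ℕ => ((i:ℝ)+1 - μ)^2 * p i) := by
    have : (fun i : ℕ => ((i:ℝ)+1 - μ)^2 * p i)
        = fun i : ℕ => (((i:ℝ) - μ)^2 * p i) + 2 * ((i:ℝ) * p i) + ((1 - 2*μ) * p i) := by
      funext i; ring
    rw [this]
    exact (hV.add (hS1.mul_left 2)).add (hS.mul_left (1 - 2*μ))
  -- g and h
  set g : ℕ → ℝ := fun i => q (i+1) - q i with hgdef
  set h : ℕ → ℝ := fun i => ((i:ℝ)+1 - μ) * (q (i+1) + q i) with hhdef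
  have hg2 : Summable (fun i => g i ^ 2) := by
    apply Summable.of_nonneg_of_le (fun i => sq_nonneg _) (fun i => ?_)
      (((((summable_nat_add_iff 1).mpr hS).add hS)).mul_left 2)
    have := hq2 (i+1); have := hq2 i
    have h1 : 0 ≤ q (i+1) := Real.sqrt_nonneg _
    have h2 : 0 ≤ q i := Real.sqrt_nonneg _
    simp only [hgdef]
    nlinarith [sq_nonneg (q (i+1) + q i)]
  have hh2 : Summable (fun i => h i ^ 2) := by
    apply Summable.of_nonneg_of_le (fun i => sq_nonneg _) (fun i => ?_)
      ((hVs.add hW).mul_left 2)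
    have e1 := hq2 (i+1); have e2 := hq2 i
    have h1 : 0 ≤ q (i+1) := Real.sqrt_nonneg _
    have h2 : 0 ≤ q i := Real.sqrt_nonneg _
    simp only [hhdef]
    have : (((i:ℝ)+1 - μ) * (q (i+1) + q i))^2
        = ((i:ℝ)+1-μ)^2 * (q (i+1) + q i)^2 := by ring
    rw [this]
    nlinarith [sq_nonneg (((i:ℝ)+1-μ)) , sq_nonneg (q (i+1) - q i),
      mul_le_mul_of_nonneg_left (show (q (i+1) + q i)^2 ≤ 2 * (p (i+1) + p i) by nlinarith [sq_nonneg (q (i+1) - q i)]) (sq_nonneg ((i:ℝ)+1-μ))]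
  -- identity g*h = (i+1-μ)(p(i+1)-p i)
  have hgh : ∀ i, g i * h i = ((i:ℝ)+1 - μ) * (p (i+1) - p i) := by
    intro i
    have e1 := hq2 (i+1); have e2 := hq2 i
    simp only [hgdef, hhdef]
    rw [← e1, ← e2]; ring
  -- summability of g*h
  have hghs : Summable (fun i => g i * h i) := by
    apply Summable.of_abs
    exact Summable.of_nonneg_of_le (fun i => abs_nonneg _)
      (fun i => abs_mul_le_half (g i) (h i)) ((hg2.add hh2).mul_left (1/2))
  -- telescoping: partial sums
  have htel : ∀ N : ℕ, ∑ i ∈ Finset.range N, g i * h i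
      = ((N:ℝ) - μ) * p N - ∑ i ∈ Finset.range N, p i := by
    intro N
    induction N with
    | zero => simp [h0]
    | succ N ih =>
      rw [Finset.sum_range_succ, ih, hgh, Finset.sum_range_succ]
      push_cast
      ring
  -- limits
  have hNp : Tendsto (fun N : ℕ => (N:ℝ) * p N) atTop (nhds 0) := by
    have h2 : Tendsto (fun N : ℕ => (N:ℝ)^2 * p N) atTop (nhds 0) :=
      hmom.tendsto_atTop_zero
    apply squeeze_zero (fun N => mul_nonneg (Nat.cast_nonneg N) (hp N)) hle1 h2
  have hlim : Tendsto (fun N : ℕ => ((N:ℝ) - μ) * p N - ∑ i ∈ Finset.range N, p i)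
      atTop (nhds (-1)) := by
    have h1 : Tendsto (fun N : ℕ => ((N:ℝ) - μ) * p N) atTop (nhds 0) := by
      have : (fun N : ℕ => ((N:ℝ) - μ) * p N)
          = fun N : ℕ => (N:ℝ) * p N - μ * p N := by funext N; ring
      rw [this]
      have := (htend.const_mul μ)
      simpa using hNp.sub this
    have h2 : Tendsto (fun N : ℕ => ∑ i ∈ Finset.range N, p i) atTop (nhds 1) := by
      have := hS.hasSum.tendsto_sum_nat
      rwa [hsum] at this
    simpa using h1.sub h2
  have hghval : ∑' i, g i * h i = -1 := by
    have t1 : Tendsto (fun N : ℕ => ∑ i ∈ Finset.range N, g i * h i) atTop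
        (nhds (∑' i, g i * h i)) := hghs.hasSum.tendsto_sum_nat
    have t2 : Tendsto (fun N : ℕ => ∑ i ∈ Finset.range N, g i * h i) atTop (nhds (-1)) := by
      apply hlim.congr
      intro N; exact (htel N).symm
    exact tendsto_nhds_unique t1 t2
  -- tsum computations
  have hVval : ∑' i : ℕ, ((i:ℝ) - μ)^2 * p i = σ2 := by
    have e : (fun i : ℕ => ((i:ℝ) - μ)^2 * p i)
        = fun i : ℕ => ((i:ℝ)^2 * p i) - (2*μ) * ((i:ℝ) * p i) + μ^2 * p i := by
      funext i; ring
    rw [e, Summable.tsum_add (Summable.sub hmom (hS1.mul_left (2*μ))) (hS.mul_left (μ^2)),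
      Summable.tsum_sub hmom (hS1.mul_left (2*μ)), tsum_mul_left, tsum_mul_left, hsum]
    rw [hσ, ← hμ]
    ring
  have hVsval : ∑' i : ℕ, ((i:ℝ)+1 - μ)^2 * p (i+1) = σ2 := by
    have h1 := Summable.tsum_eq_zero_add (f := fun i : ℕ => ((i:ℝ) - μ)^2 * p i) hV
    rw [hVval] at h1
    simp only [Nat.cast_zero, h0, mul_zero, zero_add, Nat.cast_add, Nat.cast_one] at h1
    rw [show (∑' i : ℕ, ((i:ℝ)+1 - μ)^2 * p (i+1))
      = ∑' i : ℕ, (((i+1 : ℕ):ℝ) - μ)^2 * p (i+1) from tsum_congr fun i => by push_cast; ring]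
    push_cast
    linarith [h1]
  have hWval : ∑' i : ℕ, ((i:ℝ)+1 - μ)^2 * p i = σ2 + 1 := by
    have e : (fun i : ℕ => ((i:ℝ)+1 - μ)^2 * p i)
        = fun i : ℕ => (((i:ℝ) - μ)^2 * p i) + 2 * ((i:ℝ) * p i) + ((1 - 2*μ) * p i) := by
      funext i; ring
    rw [e, Summable.tsum_add (hV.add (hS1.mul_left 2)) (hS.mul_left (1 - 2*μ)),
      Summable.tsum_add hV (hS1.mul_left 2), tsum_mul_left, tsum_mul_left, hsum, hVval, ← hμ]
    ring
  -- bound on ∑ h², via comparison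
  have hBbound : ∑' i, h i ^ 2 ≤ 4 * σ2 + 2 := by
    have hle : ∀ i, h i ^ 2 ≤ 2 * (((i:ℝ)+1 - μ)^2 * p (i+1) + ((i:ℝ)+1 - μ)^2 * p i) := by
      intro i
      have e1 := hq2 (i+1); have e2 := hq2 i
      simp only [hhdef]
      have key : (q (i+1) + q i)^2 ≤ 2 * (p (i+1) + p i) := by
        nlinarith [sq_nonneg (q (i+1) - q i)]
      calc (((i:ℝ)+1 - μ) * (q (i+1) + q i))^2
          = ((i:ℝ)+1-μ)^2 * (q (i+1) + q i)^2 := by ring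
        _ ≤ ((i:ℝ)+1-μ)^2 * (2 * (p (i+1) + p i)) :=
            mul_le_mul_of_nonneg_left key (sq_nonneg _)
        _ = 2 * (((i:ℝ)+1 - μ)^2 * p (i+1) + ((i:ℝ)+1 - μ)^2 * p i) := by ring
    calc ∑' i, h i ^ 2
        ≤ ∑' i : ℕ, 2 * (((i:ℝ)+1 - μ)^2 * p (i+1) + ((i:ℝ)+1 - μ)^2 * p i) :=
          Summable.tsum_le_tsum hle hh2 ((hVs.add hW).mul_left 2)
      _ = 2 * ((∑' i : ℕ, ((i:ℝ)+1 - μ)^2 * p (i+1)) + ∑' i : ℕ, ((i:ℝ)+1 - μ)^2 * p i) := by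
          rw [tsum_mul_left, Summable.tsum_add hVs hW]
      _ = 4 * σ2 + 2 := by rw [hVsval, hWval]; ring
  -- Cauchy-Schwarz
  have hcs := tsum_cs g h hg2 hh2
  rw [hghval] at hcs
  set T := ∑' i, g i ^ 2 with hT
  have hT0 : 0 ≤ T := by rw [hT]; exact tsum_nonneg fun i => sq_nonneg _
  clear_value T
  rw [ge_iff_le]
  calc (1:ℝ) = (-1:ℝ)^2 := by norm_num
    _ ≤ T * ∑' i, h i ^ 2 := hcs
    _ ≤ T * (4 * σ2 + 2) := mul_le_mul_of_nonneg_left hBbound hT0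
    _ = (σ2 + 1/2) * (4 * T) := by ring
end

section
/- For a pmf p on ℕ with p(i) → 0, the discrete Fisher information strictly dominates the squared sup-norm: I_d(p) > ‖p‖_∞², where ‖p‖_∞ = sup_i p(i). -/
open Filter Real Topology

/-! Put `b i = √(p i)` and let `M = p k` be the maximum of `p`. Telescoping gives
`M = ∑_{i ≥ k} (b i - b (i + 1)) (b i + b (i + 1))`, so by Cauchy–Schwarz `M²` is at most
`I_d / 4` times `∑_{i ≥ k} (b i + b (i + 1))²`, and `(x + y)² ≤ 2x² + 2y²` bounds the latter sum
by `4 - 2M`. Hence `M² ≤ I_d (1 - M / 2) < I_d`, strictly because `M > 0`. -/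

section SquareSummable

variable {ι : Type*} {f g : ι → ℝ}

theorem summable_mul_of_summable_sq (hf : Summable fun i => f i ^ 2)
    (hg : Summable fun i => g i ^ 2) : Summable fun i => f i * g i :=
  ((hf.add hg).div_const 2).of_norm_bounded fun i => by
    rw [Real.norm_eq_abs, abs_mul]
    nlinarith [sq_nonneg (|f i| - |g i|), sq_abs (f i), sq_abs (g i)]

theorem summable_sq_add_of_summable_sq (hf : Summable fun i => f i ^ 2)
    (hg : Summable fun i => g i ^ 2) : Summable fun i => (f i + g i) ^ 2 :=
  ((hf.add hg).mul_left 2).of_nonneg_of_le (fun _ => sq_nonneg _) fun i => by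
    nlinarith [sq_nonneg (f i - g i)]

theorem summable_sq_sub_of_summable_sq (hf : Summable fun i => f i ^ 2)
    (hg : Summable fun i => g i ^ 2) : Summable fun i => (f i - g i) ^ 2 := by
  simpa [sub_eq_add_neg] using
    summable_sq_add_of_summable_sq hf (g := fun i => -g i) (by simpa using hg)

theorem sq_tsum_mul_le_tsum_sq_mul_tsum_sq
    (hf : Summable fun i => f i ^ 2) (hg : Summable fun i => g i ^ 2) :
    (∑' i, f i * g i) ^ 2 ≤ (∑' i, f i ^ 2) * ∑' i, g i ^ 2 := by
  refine le_of_tendsto' ((summable_mul_of_summable_sq hf hg).hasSum.pow 2) fun s => ?_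
  refine (Finset.sum_mul_sq_le_sq_mul_sq s f g).trans ?_
  exact mul_le_mul (hf.sum_le_tsum s fun i _ => sq_nonneg _)
    (hg.sum_le_tsum s fun i _ => sq_nonneg _) (s.sum_nonneg fun i _ => sq_nonneg _)
    (tsum_nonneg fun i => sq_nonneg _)

end SquareSummable

theorem hasSum_sub_succ {G : Type*} [AddCommGroup G] [TopologicalSpace G]
    [IsTopologicalAddGroup G] {f : ℕ → G} (hf : Summable f) :
    HasSum (fun i => f i - f (i + 1)) (f 0) := by
  simpa using hf.hasSum.sub ((hasSum_nat_add_iff' 1).2 hf.hasSum)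

theorem sq_sq_zero_le_tsum_sq_sub_succ_mul {b : ℕ → ℝ} (hb : Summable fun i => b i ^ 2) :
    (b 0 ^ 2) ^ 2 ≤ (∑' i, (b (i + 1) - b i) ^ 2) * (4 * ∑' i, b i ^ 2 - 2 * b 0 ^ 2) := by
  have hb₁ : Summable fun i => b (i + 1) ^ 2 := (summable_nat_add_iff 1).2 hb
  have hsub := summable_sq_sub_of_summable_sq hb hb₁
  have hadd := summable_sq_add_of_summable_sq hb hb₁
  have htel : b 0 ^ 2 = ∑' i, (b i - b (i + 1)) * (b i + b (i + 1)) :=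
    (hasSum_sub_succ hb).tsum_eq.symm.trans (tsum_congr fun i => by ring)
  have hsub_eq : ∑' i, (b i - b (i + 1)) ^ 2 = ∑' i, (b (i + 1) - b i) ^ 2 :=
    tsum_congr fun i => by ring
  have hadd_le : ∑' i, (b i + b (i + 1)) ^ 2 ≤ 4 * ∑' i, b i ^ 2 - 2 * b 0 ^ 2 := by
    calc ∑' i, (b i + b (i + 1)) ^ 2 ≤ ∑' i, 2 * (b i ^ 2 + b (i + 1) ^ 2) :=
          hadd.tsum_le_tsum (fun i => by nlinarith [sq_nonneg (b i - b (i + 1))])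
            ((hb.add hb₁).mul_left 2)
      _ = 4 * ∑' i, b i ^ 2 - 2 * b 0 ^ 2 := by
          rw [tsum_mul_left, hb.tsum_add hb₁, hb.tsum_eq_zero_add]
          ring
  calc (b 0 ^ 2) ^ 2
      ≤ (∑' i, (b i - b (i + 1)) ^ 2) * ∑' i, (b i + b (i + 1)) ^ 2 :=
        htel ▸ sq_tsum_mul_le_tsum_sq_mul_tsum_sq hsub hadd
    _ ≤ _ := hsub_eq ▸ mul_le_mul_of_nonneg_left hadd_le (tsum_nonneg fun i => sq_nonneg _)

theorem sq_sq_le_tsum_sq_sub_succ_mul {b : ℕ → ℝ} (hb : Summable fun i => b i ^ 2) (k : ℕ) :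
    (b k ^ 2) ^ 2 ≤ (∑' i, (b (i + 1) - b i) ^ 2) * (4 * ∑' i, b i ^ 2 - 2 * b k ^ 2) := by
  have hbk : Summable fun i => b (i + k) ^ 2 := (summable_nat_add_iff k).2 hb
  have hsub : Summable fun i => (b (i + 1) - b i) ^ 2 :=
    summable_sq_sub_of_summable_sq ((summable_nat_add_iff 1).2 hb) hb
  have h₀ := sq_sq_zero_le_tsum_sq_sub_succ_mul hbk
  simp only [zero_add, add_right_comm _ 1 k] at h₀
  have hsub_le : ∑' i, (b (i + k + 1) - b (i + k)) ^ 2 ≤ ∑' i, (b (i + 1) - b i) ^ 2 :=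
    tsum_comp_le_tsum_of_inj hsub (fun _ => sq_nonneg _) (add_left_injective k)
  have hsq_le : ∑' i, b (i + k) ^ 2 ≤ ∑' i, b i ^ 2 :=
    tsum_comp_le_tsum_of_inj hb (fun _ => sq_nonneg _) (add_left_injective k)
  have hbk_le : b k ^ 2 ≤ ∑' i, b (i + k) ^ 2 := by
    simpa using hbk.le_tsum 0 fun _ _ => sq_nonneg _
  exact h₀.trans (mul_le_mul hsub_le (by linarith) (by linarith [sq_nonneg (b k)])
    (tsum_nonneg fun _ => sq_nonneg _))

theorem Filter.Tendsto.exists_forall_ge_of_lt {α : Type*} [LinearOrder α] [TopologicalSpace α]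
    [OrderTopology α] {f : ℕ → α} {a : α} (hf : Tendsto f atTop (𝓝 a)) {j : ℕ} (hj : a < f j) :
    ∃ k, ∀ i, f i ≤ f k :=
  continuous_of_discreteTopology.exists_forall_ge' j <| by
    rw [cocompact_eq_atTop]
    exact (hf.eventually (gt_mem_nhds hj)).mono fun _ => le_of_lt

theorem dfi_gt_sup_sq (p : ℕ → ℝ) (hp : ∀ i, 0 ≤ p i)
    (hsum : ∑' i, p i = 1) (htend : Tendsto p atTop (nhds 0)) :
    4 * ∑' i : ℕ, (Real.sqrt (p (i + 1)) - Real.sqrt (p i)) ^ 2 > (⨆ i, p i) ^ 2 := by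
  have hsumm : Summable p := by
    by_contra h
    simp [tsum_eq_zero_of_not_summable h] at hsum
  obtain ⟨j, hj⟩ : ∃ j, p j ≠ 0 := by
    by_contra! h
    simp [h] at hsum
  obtain ⟨k, hk⟩ := htend.exists_forall_ge_of_lt ((hp j).lt_of_ne' hj)
  have hsup : ⨆ i, p i = p k :=
    le_antisymm (ciSup_le hk) (le_ciSup ⟨p k, Set.forall_mem_range.2 hk⟩ k)
  have hpk : 0 < p k := ((hp j).lt_of_ne' hj).trans_le (hk j)
  have hsq : ∀ i, √(p i) ^ 2 = p i := fun i => sq_sqrt (hp i)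
  have hbound :=
    sq_sq_le_tsum_sq_sub_succ_mul (b := fun i => √(p i)) (by simpa [hsq] using hsumm) k
  simp only [hsq, hsum] at hbound
  set T := ∑' i, (√(p (i + 1)) - √(p i)) ^ 2
  have hT : 0 < T := by
    refine (show 0 ≤ T from tsum_nonneg fun _ => sq_nonneg _).lt_of_ne' fun hT => ?_
    rw [hT, zero_mul] at hbound
    exact (pow_pos hpk 2).not_ge hbound
  rw [hsup]
  nlinarith [mul_pos hpk hT]
end

section
/- Inequality for the maximum of a pmf: for a pmf p on ℕ with p(i) → 0, one has I_d(p) > ‖p‖_∞² + (‖p‖_∞ − p(0))², where ‖p‖_∞ = sup_i p(i) and I_d is the discrete Fisher information. -/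
/-!
Write `Δᵢ = √p(i+1) - √p(i)` and let `k` be a point where `p` attains its maximum `M`. Since
`p(b) - p(a) = ∑ Δᵢ (√p(i+1) + √p(i))`, Cauchy–Schwarz bounds `(p(b) - p(a))²` by `∑ Δᵢ²` times
`∑ (√p(i+1) + √p(i))² ≤ 2 ∑ (p(i) + p(i+1))`, and the latter is at most `4 - 2M` on any segment
having `k` as an endpoint, because the total mass is `1`. Applying this on `[0, k]` and on
`[k, n]` and letting `n → ∞` (so `p(n) → 0`) gives `(M - p(0))² + M² ≤ I_d(p)(1 - M/2) < I_d(p)`.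
-/

open Filter Real Finset Topology

theorem Filter.Tendsto.exists_forall_le_of_lt {α β : Type*} [LinearOrder β] [TopologicalSpace β]
    [ClosedIciTopology β] {f : α → β} {x : β} (hf : Tendsto f cofinite (𝓝 x)) {j : α}
    (hj : x < f j) : ∃ k, ∀ i, f i ≤ f k := by
  have hfin : {i | f j ≤ f i}.Finite := by
    simpa only [not_lt] using eventually_cofinite.1 (hf.eventually_lt_const hj)
  obtain ⟨k, hk, hmax⟩ := Set.exists_max_image _ f hfin ⟨j, le_rfl⟩
  refine ⟨k, fun i => ?_⟩
  by_cases hi : f j ≤ f i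
  · exact hmax i hi
  · exact (lt_of_not_ge hi).le.trans hk

section SqrtDifferences

variable {q : ℕ → ℝ}

lemma sq_sqrt_sub_sqrt_le_add {a b : ℝ} (ha : 0 ≤ a) (hb : 0 ≤ b) :
    (√b - √a) ^ 2 ≤ a + b := by
  nlinarith [sq_sqrt ha, sq_sqrt hb, mul_nonneg (sqrt_nonneg a) (sqrt_nonneg b)]

lemma sq_sqrt_add_sqrt_le {a b : ℝ} (ha : 0 ≤ a) (hb : 0 ≤ b) :
    (√b + √a) ^ 2 ≤ 2 * (a + b) := by
  nlinarith [sq_sqrt ha, sq_sqrt hb, sq_nonneg (√a - √b)]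

lemma summable_sq_sqrt_succ_sub_sqrt (hq : ∀ i, 0 ≤ q i) (hs : Summable q) :
    Summable fun i => (√(q (i + 1)) - √(q i)) ^ 2 :=
  .of_nonneg_of_le (fun _ => sq_nonneg _) (fun i => sq_sqrt_sub_sqrt_le_add (hq i) (hq (i + 1)))
    (hs.add ((summable_nat_add_iff 1).2 hs))

lemma sum_range_add_succ (q : ℕ → ℝ) (n : ℕ) :
    ∑ i ∈ range n, (q i + q (i + 1)) = 2 * ∑ i ∈ range (n + 1), q i - q 0 - q n := by
  induction n with
  | zero => simp; ring
  | succ n ih => rw [sum_range_succ, ih, sum_range_succ _ (n + 1)]; ring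

lemma sq_sub_le_sum_sq_sqrt_sub_mul (hq : ∀ i, 0 ≤ q i) (n : ℕ) :
    (q n - q 0) ^ 2 ≤
      (∑ i ∈ range n, (√(q (i + 1)) - √(q i)) ^ 2) * (2 * ∑ i ∈ range n, (q i + q (i + 1))) := by
  have htelescope : ∑ i ∈ range n, (√(q (i + 1)) - √(q i)) * (√(q (i + 1)) + √(q i)) =
      q n - q 0 := by
    rw [← sum_range_sub q n]
    refine sum_congr rfl fun i _ => ?_
    linear_combination sq_sqrt (hq (i + 1)) - sq_sqrt (hq i)
  calc (q n - q 0) ^ 2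
      ≤ (∑ i ∈ range n, (√(q (i + 1)) - √(q i)) ^ 2) *
          ∑ i ∈ range n, (√(q (i + 1)) + √(q i)) ^ 2 :=
        htelescope ▸ sum_mul_sq_le_sq_mul_sq _ _ _
    _ ≤ _ := by
        refine mul_le_mul_of_nonneg_left ?_ (sum_nonneg fun _ _ => sq_nonneg _)
        rw [mul_sum]
        exact sum_le_sum fun i _ => sq_sqrt_add_sqrt_le (hq i) (hq (i + 1))

lemma sq_sub_le_sum_sq_sqrt_sub_mul_of_sum_le_one (hq : ∀ i, 0 ≤ q i) {n : ℕ}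
    (hmass : ∑ i ∈ range (n + 1), q i ≤ 1) :
    (q n - q 0) ^ 2 ≤ (∑ i ∈ range n, (√(q (i + 1)) - √(q i)) ^ 2) * (4 - 2 * (q 0 + q n)) := by
  refine (sq_sub_le_sum_sq_sqrt_sub_mul hq n).trans ?_
  rw [sum_range_add_succ]
  exact mul_le_mul_of_nonneg_left (by linarith) (sum_nonneg fun _ _ => sq_nonneg _)

lemma sq_sub_add_sq_sub_le (hq : ∀ i, 0 ≤ q i) (hmass : ∀ n, ∑ i ∈ range n, q i ≤ 1)
    {k n : ℕ} (hkn : k ≤ n) :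
    (q k - q 0) ^ 2 + (q n - q k) ^ 2 ≤
      (∑ i ∈ range n, (√(q (i + 1)) - √(q i)) ^ 2) * (4 - 2 * q k) := by
  obtain ⟨m, rfl⟩ := Nat.exists_eq_add_of_le hkn
  have hleft := sq_sub_le_sum_sq_sqrt_sub_mul_of_sum_le_one hq (hmass (k + 1))
  have hright := sq_sub_le_sum_sq_sqrt_sub_mul_of_sum_le_one (q := fun i => q (k + i))
    (fun i => hq _) (n := m) <| by
      have := hmass (k + (m + 1))
      rw [sum_range_add] at this
      linarith [sum_nonneg fun i (_ : i ∈ range k) => hq i]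
  simp only [add_zero, ← add_assoc] at hright
  rw [sum_range_add, add_mul]
  refine (add_le_add hleft hright).trans (add_le_add ?_ ?_) <;>
    exact mul_le_mul_of_nonneg_left (by linarith [hq 0, hq (k + m)])
      (sum_nonneg fun _ _ => sq_nonneg _)

lemma sq_sub_add_sq_le_tsum_mul (hq : ∀ i, 0 ≤ q i) (hs : Summable q) (hsum : ∑' i, q i = 1)
    (htend : Tendsto q atTop (𝓝 0)) (k : ℕ) :
    (q k - q 0) ^ 2 + q k ^ 2 ≤ (∑' i, (√(q (i + 1)) - √(q i)) ^ 2) * (4 - 2 * q k) := by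
  have hmass (n : ℕ) : ∑ i ∈ range n, q i ≤ 1 := by
    rw [← hsum]
    exact hs.sum_le_tsum _ fun i _ => hq i
  have hlim : Tendsto (fun n => (q k - q 0) ^ 2 + (q n - q k) ^ 2) atTop
      (𝓝 ((q k - q 0) ^ 2 + (0 - q k) ^ 2)) :=
    tendsto_const_nhds.add ((htend.sub_const _).pow 2)
  have hfactor : 0 ≤ 4 - 2 * q k := by
    linarith [hmass (k + 1), sum_range_succ q k, sum_nonneg fun i (_ : i ∈ range k) => hq i]
  have hbound := le_of_tendsto hlim <| (eventually_ge_atTop k).mono fun n hkn =>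
    (sq_sub_add_sq_sub_le hq hmass hkn).trans <| mul_le_mul_of_nonneg_right
      ((summable_sq_sqrt_succ_sub_sqrt hq hs).sum_le_tsum _ fun _ _ => sq_nonneg _) hfactor
  linarith [hbound]

end SqrtDifferences

theorem dfi_max_inequality (p : ℕ → ℝ) (hp : ∀ i, 0 ≤ p i)
    (hsum : ∑' i, p i = 1) (htend : Tendsto p atTop (nhds 0)) :
    4 * ∑' i : ℕ, (Real.sqrt (p (i + 1)) - Real.sqrt (p i)) ^ 2 >
      (⨆ i, p i) ^ 2 + ((⨆ i, p i) - p 0) ^ 2 := by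
  have hs : Summable p := by
    by_contra h
    simp [tsum_eq_zero_of_not_summable h] at hsum
  obtain ⟨j, hj⟩ : ∃ j, 0 < p j := by
    by_contra! h
    simp [fun i => le_antisymm (h i) (hp i)] at hsum
  obtain ⟨k, hk⟩ := (Nat.cofinite_eq_atTop ▸ htend).exists_forall_le_of_lt hj
  have hsup : ⨆ i, p i = p k := le_antisymm (ciSup_le hk) (le_ciSup ⟨p k, Set.forall_mem_range.2 hk⟩ k)
  have hkpos : 0 < p k := hj.trans_le (hk j)
  have hbound := sq_sub_add_sq_le_tsum_mul hp hs hsum htend k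
  have hI : 0 ≤ ∑' i, (√(p (i + 1)) - √(p i)) ^ 2 := tsum_nonneg fun _ => sq_nonneg _
  rw [hsup]
  nlinarith [mul_nonneg hkpos.le hI, sq_nonneg (p k - p 0), mul_pos hkpos hkpos]
end

section
/- Tightness of the maximum inequality: for the geometric pmf p_q(i) = q·(1−q)^i with 0 < q ≤ 1, the ratio (‖p_q‖_∞² + (‖p_q‖_∞ − p_q(0))²)/I_d(p_q) tends to 1 as q → 0⁺. Consequently, any constant α such that α·I_d(p) > ‖p‖_∞² + (‖p‖_∞ − p(0))² for all pmfs p with p(i) → 0 must satisfy α ≥ 1. -/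
/-! For `p_q(i) = q (1-q)^i` the supremum is `p_q(0) = q` and, writing `s = √(1-q)`, the Dirichlet
sum is a geometric series equal to `(1 - s)²`. Since `q = 1 - s² = (1 - s)(1 + s)`, the ratio is
`q² / (4 (1 - s)²) = (1 + s)² / 4`, which tends to `1` as `q → 0⁺`. Any admissible `α` exceeds every
value of the ratio, hence its limit. -/

open Filter Real Set

lemma ciSup_mul_pow_of_le_one {c r : ℝ} (hc : 0 ≤ c) (hr₀ : 0 ≤ r) (hr₁ : r ≤ 1) :
    ⨆ i : ℕ, c * r ^ i = c := by
  have hle : ∀ i : ℕ, c * r ^ i ≤ c := fun i => mul_le_of_le_one_right hc (pow_le_one₀ hr₀ hr₁)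
  refine le_antisymm (ciSup_le hle) ?_
  simpa using le_ciSup (f := fun i : ℕ => c * r ^ i) ⟨c, forall_mem_range.2 hle⟩ 0

lemma sq_sqrt_mul_pow_succ_sub {c r : ℝ} (hc : 0 ≤ c) (hr : 0 ≤ r) (i : ℕ) :
    (√(c * r ^ (i + 1)) - √(c * r ^ i)) ^ 2 = c * (1 - √r) ^ 2 * r ^ i := by
  have hci : 0 ≤ c * r ^ i := mul_nonneg hc (pow_nonneg hr i)
  rw [pow_succ r i, ← mul_assoc, sqrt_mul hci]
  calc (√(c * r ^ i) * √r - √(c * r ^ i)) ^ 2 = √(c * r ^ i) ^ 2 * (1 - √r) ^ 2 := by ring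
    _ = c * (1 - √r) ^ 2 * r ^ i := by rw [sq_sqrt hci]; ring

lemma tsum_sq_sqrt_mul_pow_succ_sub {c r : ℝ} (hc : 0 ≤ c) (hr₀ : 0 ≤ r) (hr₁ : r < 1) :
    ∑' i : ℕ, (√(c * r ^ (i + 1)) - √(c * r ^ i)) ^ 2 = c * (1 - √r) ^ 2 / (1 - r) := by
  simp_rw [sq_sqrt_mul_pow_succ_sub hc hr₀, tsum_mul_left, tsum_geometric_of_lt_one hr₀ hr₁,
    div_eq_mul_inv]

section Geometric

variable {q : ℝ}

lemma tsum_mul_one_sub_pow (hq : q ∈ Ioc 0 1) : ∑' i : ℕ, q * (1 - q) ^ i = 1 := by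
  rw [tsum_mul_left, tsum_geometric_of_lt_one (by linarith [hq.2]) (by linarith [hq.1]),
    sub_sub_cancel, mul_inv_cancel₀ hq.1.ne']

lemma tendsto_mul_one_sub_pow_atTop (hq : q ∈ Ioc 0 1) :
    Tendsto (fun i : ℕ => q * (1 - q) ^ i) atTop (nhds 0) := by
  simpa using
    (tendsto_pow_atTop_nhds_zero_of_lt_one (by linarith [hq.2]) (by linarith [hq.1])).const_mul q

lemma tsum_sq_sqrt_mul_one_sub_pow_succ_sub (hq : q ∈ Ioc 0 1) :
    ∑' i : ℕ, (√(q * (1 - q) ^ (i + 1)) - √(q * (1 - q) ^ i)) ^ 2 = (1 - √(1 - q)) ^ 2 := by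
  rw [tsum_sq_sqrt_mul_pow_succ_sub hq.1.le (by linarith [hq.2]) (by linarith [hq.1]),
    sub_sub_cancel, mul_div_cancel_left₀ _ hq.1.ne']

lemma one_sub_sqrt_one_sub_pos (hq : 0 < q) : 0 < 1 - √(1 - q) := by
  rw [sub_pos, sqrt_lt' one_pos]; linarith

lemma maxRatio_mul_one_sub_pow (hq : q ∈ Ioc 0 1) :
    ((⨆ i : ℕ, q * (1 - q) ^ i) ^ 2 + ((⨆ i : ℕ, q * (1 - q) ^ i) - q * (1 - q) ^ (0 : ℕ)) ^ 2) /
        (4 * ∑' i : ℕ, (√(q * (1 - q) ^ (i + 1)) - √(q * (1 - q) ^ i)) ^ 2) =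
      (1 + √(1 - q)) ^ 2 / 4 := by
  have hr : 0 ≤ 1 - q := by linarith [hq.2]
  rw [ciSup_mul_pow_of_le_one hq.1.le hr (by linarith [hq.1]),
    tsum_sq_sqrt_mul_one_sub_pow_succ_sub hq, pow_zero, mul_one, sub_self,
    div_eq_div_iff (by have := one_sub_sqrt_one_sub_pos hq.1; positivity) four_ne_zero]
  -- `q = 1 - s² = (1 - s)(1 + s)` for `s = √(1 - q)`
  linear_combination 4 * (q + 1 - √(1 - q) ^ 2) * sq_sqrt hr

end Geometric

lemma tendsto_one_add_sqrt_one_sub_sq_div_four :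
    Tendsto (fun q : ℝ => (1 + √(1 - q)) ^ 2 / 4) (nhdsWithin 0 (Ioi 0)) (nhds 1) := by
  have h : ContinuousAt (fun q : ℝ => (1 + √(1 - q)) ^ 2 / 4) 0 := by fun_prop
  convert h.tendsto.mono_left nhdsWithin_le_nhds using 2
  norm_num

theorem max_inequality_tight :
    Tendsto
      (fun q : ℝ =>
        ((⨆ i : ℕ, q * (1 - q) ^ i) ^ 2 + ((⨆ i : ℕ, q * (1 - q) ^ i) - q * (1 - q) ^ (0 : ℕ)) ^ 2) /
          (4 * ∑' i : ℕ, (Real.sqrt (q * (1 - q) ^ (i + 1)) - Real.sqrt (q * (1 - q) ^ i)) ^ 2))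
      (nhdsWithin 0 (Set.Ioi 0)) (nhds 1) ∧
    ∀ α : ℝ,
      (∀ p : ℕ → ℝ, (∀ i, 0 ≤ p i) → ∑' i, p i = 1 → Tendsto p atTop (nhds 0) →
        α * (4 * ∑' i : ℕ, (Real.sqrt (p (i + 1)) - Real.sqrt (p i)) ^ 2) >
          (⨆ i, p i) ^ 2 + ((⨆ i, p i) - p 0) ^ 2) →
      1 ≤ α := by
  have htight := tendsto_one_add_sqrt_one_sub_sq_div_four.congr' <| eventually_of_mem (Ioc_mem_nhdsGT zero_lt_one)
    fun q hq => (maxRatio_mul_one_sub_pow hq).symm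
  refine ⟨htight, fun α hα => le_of_tendsto htight ?_⟩
  filter_upwards [Ioc_mem_nhdsGT zero_lt_one] with q hq
  have hgeom := hα _ (fun i => mul_nonneg hq.1.le (pow_nonneg (by linarith [hq.2]) i))
    (tsum_mul_one_sub_pow hq) (tendsto_mul_one_sub_pow_atTop hq)
  refine (div_lt_iff₀ ?_).2 hgeom |>.le
  rw [tsum_sq_sqrt_mul_one_sub_pow_succ_sub hq]
  have := one_sub_sqrt_one_sub_pos hq.1
  positivity
end

section
/- Discrete Stam's inequality: for a pmf p on ℕ with p(i) → 0 and finite Shannon entropy H(p), the entropy power N_d(p) := exp(2·H(p)) satisfies N_d(p)·I_d(p) > 1. -/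
open Filter Real

theorem discrete_stam (p : ℕ → ℝ) (hp : ∀ i, 0 ≤ p i)
    (hsum : ∑' i, p i = 1) (htend : Tendsto p atTop (nhds 0))
    (hent : Summable (fun i : ℕ => p i * Real.log (p i))) :
    Real.exp (2 * (-∑' i : ℕ, p i * Real.log (p i))) *
      (4 * ∑' i : ℕ, (Real.sqrt (p (i + 1)) - Real.sqrt (p i)) ^ 2) > 1 := by
  -- p is summable
  have hps : Summable p := by
    by_contra h
    rw [tsum_eq_zero_of_not_summable h] at hsum
    norm_num at hsum
  -- existence of a maximizer
  obtain ⟨k, hk⟩ : ∃ k, ∀ i, p i ≤ p k := by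
    obtain ⟨j, hj⟩ : ∃ j, 0 < p j := by
      by_contra h
      push_neg at h
      have hz : ∀ i, p i = 0 := fun i => le_antisymm (h i) (hp i)
      rw [show p = fun _ => (0:ℝ) from funext hz] at hsum
      simp at hsum
    have hev : ∀ᶠ i in atTop, p i < p j := htend.eventually (gt_mem_nhds hj)
    have hfin : {i : ℕ | p j ≤ p i}.Finite := by
      rw [← Nat.cofinite_eq_atTop, eventually_cofinite] at hev
      exact hev.subset (fun i hi => by simpa using hi)
    obtain ⟨k, _, hk⟩ := Set.exists_max_image _ p (hfin.union (Set.finite_singleton j))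
      ⟨j, Or.inr rfl⟩
    refine ⟨k, fun i => ?_⟩
    rcases le_or_gt (p j) (p i) with h | h
    · exact hk i (Or.inl h)
    · exact h.le.trans (hk j (Or.inr rfl))
  obtain ⟨j, hj⟩ : ∃ j, 0 < p j := by
    by_contra h
    push_neg at h
    have hz : ∀ i, p i = 0 := fun i => le_antisymm (h i) (hp i)
    rw [show p = fun _ => (0:ℝ) from funext hz] at hsum
    simp at hsum
  set m := p k with hm
  have hm0 : 0 < m := lt_of_lt_of_le hj (hk j)
  have hm1 : m ≤ 1 := by
    have := Summable.le_tsum hps k (fun i _ => hp i)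
    rwa [hsum] at this
  -- Entropy bound: ∑ p log p ≤ log m
  have hlog : ∑' i, p i * Real.log (p i) ≤ Real.log m := by
    have h1 : ∑' i, p i * Real.log (p i) ≤ ∑' i, p i * Real.log m := by
      refine Summable.tsum_le_tsum (fun i => ?_) hent (hps.mul_right _)
      rcases eq_or_lt_of_le (hp i) with h | h
      · simp [← h]
      · exact mul_le_mul_of_nonneg_left (Real.log_le_log h (hk i)) (hp i)
    rwa [tsum_mul_right, hsum, one_mul] at h1
  have hN : m⁻¹ ^ 2 ≤ Real.exp (2 * (-∑' i : ℕ, p i * Real.log (p i))) := by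
    rw [← Real.exp_log (show (0:ℝ) < m⁻¹ ^ 2 by positivity)]
    apply Real.exp_le_exp.mpr
    rw [Real.log_pow, Real.log_inv]
    push_cast
    linarith
  -- abbreviations
  set a : ℕ → ℝ := fun i => Real.sqrt (p i) with ha
  have hsq : ∀ i, a i ^ 2 = p i := fun i => Real.sq_sqrt (hp i)
  set t : ℝ := m / (4 - 2 * m) with htdef
  have h4m : 0 < 4 - 2 * m := by linarith
  have ht : 0 < t := div_pos hm0 h4m
  -- summability facts
  have hpk : Summable (fun i => p (i + k)) := (summable_nat_add_iff k).2 hps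
  have hpk1 : Summable (fun i => p (i + k + 1)) := by
    have := (summable_nat_add_iff (k + 1)).2 hps
    exact this.congr (fun i => by ring_nf)
  have hgsum : Summable (fun i => (a (i + k) - a (i + k + 1)) ^ 2) := by
    refine Summable.of_nonneg_of_le (fun i => sq_nonneg _)
      (fun i => ?_) ((hpk.mul_left 2).add (hpk1.mul_left 2))
    have h1 := hsq (i + k); have h2 := hsq (i + k + 1)
    nlinarith [sq_nonneg (a (i + k) + a (i + k + 1))]
  have hhsum : Summable (fun i => (a (i + k) + a (i + k + 1)) ^ 2) := by
    refine Summable.of_nonneg_of_le (fun i => sq_nonneg _)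
      (fun i => ?_) ((hpk.mul_left 2).add (hpk1.mul_left 2))
    have h1 := hsq (i + k); have h2 := hsq (i + k + 1)
    nlinarith [sq_nonneg (a (i + k) - a (i + k + 1))]
  -- telescoping: ∑ (p (i+k) - p (i+k+1)) = m
  have htel : HasSum (fun i => p (i + k) - p (i + k + 1)) m := by
    have hsm : Summable (fun i => p (i + k) - p (i + k + 1)) := hpk.sub hpk1
    rw [hsm.hasSum_iff_tendsto_nat]
    have hps' : ∀ n, ∑ i ∈ Finset.range n, (p (i + k) - p (i + k + 1)) = p k - p (n + k) := by
      intro n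
      have := Finset.sum_range_sub' (f := fun i => p (i + k)) n
      simpa [Nat.add_right_comm] using this
    simp only [hps']
    have : Tendsto (fun n => p (n + k)) atTop (nhds 0) :=
      htend.comp (tendsto_add_atTop_nat k)
    simpa using (tendsto_const_nhds (x := p k)).sub this
  -- tail sum bounds
  have htail1 : ∑' i, p (i + k) ≤ 1 := by
    have h := Summable.sum_add_tsum_nat_add (f := p) k hps
    rw [hsum] at h
    have : 0 ≤ ∑ i ∈ Finset.range k, p i := Finset.sum_nonneg (fun i _ => hp i)
    linarith
  have htail2 : ∑' i, p (i + k + 1) ≤ 1 - m := by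
    have h := Summable.sum_add_tsum_nat_add (f := p) (k + 1) hps
    rw [hsum] at h
    have hmem : k ∈ Finset.range (k + 1) := Finset.self_mem_range_succ k
    have hle : m ≤ ∑ i ∈ Finset.range (k + 1), p i :=
      Finset.single_le_sum (fun i _ => hp i) hmem
    have heq : ∑' i, p (i + k + 1) = ∑' i, p (i + (k + 1)) :=
      tsum_congr (fun i => by ring_nf)
    linarith [heq ▸ (by linarith : ∑' i, p (i + (k + 1)) ≤ 1 - m)]
  -- sum of (a+a')² is at most 4 - 2m
  have hH : ∑' i, (a (i + k) + a (i + k + 1)) ^ 2 ≤ 4 - 2 * m := by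
    have h1 : ∑' i, (a (i + k) + a (i + k + 1)) ^ 2
        ≤ ∑' i, (2 * p (i + k) + 2 * p (i + k + 1)) := by
      refine Summable.tsum_le_tsum (fun i => ?_) hhsum ((hpk.mul_left 2).add (hpk1.mul_left 2))
      have hq1 := hsq (i + k); have hq2 := hsq (i + k + 1)
      nlinarith [sq_nonneg (a (i + k) - a (i + k + 1))]
    have h2 : ∑' i, (2 * p (i + k) + 2 * p (i + k + 1))
        = 2 * ∑' i, p (i + k) + 2 * ∑' i, p (i + k + 1) := by
      rw [Summable.tsum_add (hpk.mul_left 2) (hpk1.mul_left 2), tsum_mul_left, tsum_mul_left]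
    linarith [h1, h2 ▸ h1]
  -- AM-GM step, summed
  have hkey : m ≤ (1 / (2 * t)) * (∑' i, (a (i + k) - a (i + k + 1)) ^ 2)
      + (t / 2) * (4 - 2 * m) := by
    have hterm : ∀ i, p (i + k) - p (i + k + 1)
        ≤ (1 / (2 * t)) * (a (i + k) - a (i + k + 1)) ^ 2
          + (t / 2) * (a (i + k) + a (i + k + 1)) ^ 2 := by
      intro i
      set x := a (i + k) - a (i + k + 1)
      set y := a (i + k) + a (i + k + 1)
      have hxy : p (i + k) - p (i + k + 1) = x * y := by
        have h1 := hsq (i + k); have h2 := hsq (i + k + 1)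
        simp only [x, y]; nlinarith
      rw [hxy]
      have h2t : (0:ℝ) < 2 * t := by linarith
      rw [div_mul_eq_mul_div, one_mul, div_mul_eq_mul_div,
        div_add_div _ _ (ne_of_gt h2t) (by norm_num : (2:ℝ) ≠ 0),
        le_div_iff₀ (by positivity)]
      nlinarith [sq_nonneg (x - t * y)]
    have hs : m ≤ ∑' i, ((1 / (2 * t)) * (a (i + k) - a (i + k + 1)) ^ 2
        + (t / 2) * (a (i + k) + a (i + k + 1)) ^ 2) := by
      rw [← htel.tsum_eq]
      exact Summable.tsum_le_tsum hterm htel.summable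
        ((hgsum.mul_left _).add (hhsum.mul_left _))
    rw [Summable.tsum_add (hgsum.mul_left _) (hhsum.mul_left _), tsum_mul_left, tsum_mul_left] at hs
    have h2 : (t / 2) * (∑' i, (a (i + k) + a (i + k + 1)) ^ 2) ≤ (t / 2) * (4 - 2 * m) :=
      mul_le_mul_of_nonneg_left hH (by positivity)
    linarith
  -- lower bound on the tail Fisher sum
  have hG : m ^ 2 / (4 - 2 * m) ≤ ∑' i, (a (i + k) - a (i + k + 1)) ^ 2 := by
    set G := ∑' i, (a (i + k) - a (i + k + 1)) ^ 2 with hGdef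
    have h2 : 2 * t * m ≤ G + t ^ 2 * (4 - 2 * m) := by
      have hmul := mul_le_mul_of_nonneg_left hkey
        (le_of_lt (by positivity : (0:ℝ) < 2 * t))
      calc 2 * t * m ≤ 2 * t * ((1 / (2 * t)) * G + (t / 2) * (4 - 2 * m)) := hmul
        _ = G + t ^ 2 * (4 - 2 * m) := by field_simp [ht.ne']
    have h3 : 2 * t * m - t ^ 2 * (4 - 2 * m) = m ^ 2 / (4 - 2 * m) := by
      rw [htdef]; field_simp; ring
    linarith
  -- the tail sum is at most the full Fisher sum
  have hI : ∑' i, (a (i + k) - a (i + k + 1)) ^ 2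
      ≤ ∑' i : ℕ, (Real.sqrt (p (i + 1)) - Real.sqrt (p i)) ^ 2 := by
    have hIsum : Summable (fun i : ℕ => (Real.sqrt (p (i + 1)) - Real.sqrt (p i)) ^ 2) := by
      refine Summable.of_nonneg_of_le (fun i => sq_nonneg _) (fun i => ?_)
        (((summable_nat_add_iff 1).2 hps |>.mul_left 2).add (hps.mul_left 2))
      have h1 := Real.sq_sqrt (hp (i + 1)); have h2 := Real.sq_sqrt (hp i)
      nlinarith [sq_nonneg (Real.sqrt (p (i + 1)) + Real.sqrt (p i))]
    refine Summable.tsum_le_tsum_of_inj (fun i => i + k) (add_left_injective k)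
      (fun c _ => sq_nonneg _) (fun i => ?_) hgsum hIsum
    have : (a (i + k) - a (i + k + 1)) ^ 2 = (a (i + k + 1) - a (i + k)) ^ 2 := by ring
    rw [this]
  -- final assembly
  have hIpos : 0 < 4 * (m ^ 2 / (4 - 2 * m)) := by positivity
  have hfin : m⁻¹ ^ 2 * (4 * (m ^ 2 / (4 - 2 * m)))
      ≤ Real.exp (2 * (-∑' i : ℕ, p i * Real.log (p i))) *
        (4 * ∑' i : ℕ, (Real.sqrt (p (i + 1)) - Real.sqrt (p i)) ^ 2) := by
    apply mul_le_mul hN _ (le_of_lt hIpos) (le_of_lt (Real.exp_pos _))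
    have : m ^ 2 / (4 - 2 * m) ≤ ∑' i : ℕ, (Real.sqrt (p (i + 1)) - Real.sqrt (p i)) ^ 2 :=
      le_trans hG hI
    linarith
  refine lt_of_lt_of_le ?_ hfin
  rw [show m⁻¹ ^ 2 * (4 * (m ^ 2 / (4 - 2 * m))) = 4 / (4 - 2 * m) by
    field_simp]
  rw [lt_div_iff₀ h4m]
  linarith
end

section
/- Discrete Stam-type inequality: for a pmf p on ℕ with p(i) → 0 and finite entropy, (1/2)·N_d(p)·(I_d(p) + 2·p(0) − p(0)²) > 1. -/
open Filter Real

private lemma stam_core (P t v Sl Sr : ℝ) (hP0 : 0 < P) (hP1 : P ≤ 1) (ht0 : 0 ≤ t)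
    (htP : t ≤ P) (hv : 0 ≤ v) (hSl : t^2 - t^2*v - t^3/2 ≤ Sl) (hSr : P^2*v + P^3/2 ≤ Sr) :
    2*P^2 < 4*(Sl+Sr) + 2*(P-t) - (P-t)^2 := by
  nlinarith [sq_nonneg (P-t), sq_nonneg t, mul_nonneg (sub_nonneg.2 htP) hv,
    mul_nonneg ht0 (sub_nonneg.2 htP), mul_nonneg (mul_nonneg ht0 ht0) (sub_nonneg.2 hP1),
    mul_nonneg hv (mul_nonneg (sub_nonneg.2 htP) (le_of_lt hP0)),
    mul_pos hP0 hP0, mul_nonneg (mul_nonneg hP0.le hP0.le) (sub_nonneg.2 hP1),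
    mul_nonneg (sub_nonneg.2 htP) (sub_nonneg.2 hP1)]

private lemma stam_amgm (x y c : ℝ) :
    c * (x^2 - y^2) ≤ (y - x)^2 + c^2/2 * x^2 + c^2/2 * y^2 := by
  nlinarith [sq_nonneg (y - x + c/2 * (x + y)), sq_nonneg (c * (x - y))]

set_option maxHeartbeats 2000000 in
theorem discrete_stam_type (p : ℕ → ℝ) (hp : ∀ i, 0 ≤ p i)
    (hsum : ∑' i, p i = 1) (htend : Tendsto p atTop (nhds 0))
    (hent : Summable (fun i : ℕ => p i * Real.log (p i))) :
    (1 / 2) * Real.exp (2 * (-∑' i : ℕ, p i * Real.log (p i))) *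
      ((4 * ∑' i : ℕ, (Real.sqrt (p (i + 1)) - Real.sqrt (p i)) ^ 2) + 2 * p 0 - p 0 ^ 2) > 1 := by
  -- basic summability
  have hsp : Summable p := by
    by_contra h
    rw [tsum_eq_zero_of_not_summable h] at hsum; norm_num at hsum
  have hsq : ∀ i, Real.sqrt (p i) ^ 2 = p i := fun i => Real.sq_sqrt (hp i)
  have hsshift : ∀ k, Summable (fun i => p (i + k)) := fun k => (summable_nat_add_iff k).mpr hsp
  have hsd : Summable (fun i : ℕ => (Real.sqrt (p (i + 1)) - Real.sqrt (p i)) ^ 2) := by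
    apply Summable.of_nonneg_of_le (fun i => sq_nonneg _)
      (fun i => ?_) ((hsp.mul_left 2).add ((hsshift 1).mul_left 2))
    nlinarith [hsq i, hsq (i+1), sq_nonneg (Real.sqrt (p (i+1)) + Real.sqrt (p i))]
  -- argmax
  have hargmax : ∃ K, 0 < p K ∧ ∀ i, p i ≤ p K := by
    have hex : ∃ j, 0 < p j := by
      by_contra h; push_neg at h
      have hz : ∀ i, p i = 0 := fun i => le_antisymm (h i) (hp i)
      simp [hz] at hsum
    obtain ⟨j, hj⟩ := hex
    obtain ⟨N, hN⟩ := eventually_atTop.mp (htend.eventually_lt_const hj)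
    obtain ⟨K, hK1, hK2⟩ := (Finset.range (N+1)).exists_max_image p
      ⟨N, Finset.self_mem_range_succ N⟩
    have hjK : p j ≤ p K := by
      rcases lt_or_ge j (N+1) with h | h
      · exact hK2 j (Finset.mem_range.2 h)
      · exact absurd (hN j (by omega)) (lt_irrefl _)
    refine ⟨K, lt_of_lt_of_le hj hjK, fun i => ?_⟩
    rcases lt_or_ge i (N+1) with h | h
    · exact hK2 i (Finset.mem_range.2 h)
    · exact le_trans (hN i (by omega)).le hjK
  obtain ⟨K, hP0, hmax⟩ := hargmax
  -- telescoping tail sums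
  have htel : ∀ k, ∑' i, (p (i + k) - p (i + k + 1)) = p k := by
    intro k
    have hsf : Summable (fun i => p (i + k) - p (i + k + 1)) :=
      (hsshift k).sub (hsshift (k+1))
    have h2 : ∀ n, ∑ i ∈ Finset.range n, (p (i + k) - p (i + k + 1)) = p k - p (n + k) := by
      intro n
      have := Finset.sum_range_sub' (f := fun i => p (i + k)) n
      simpa [show ∀ i : ℕ, i + k + 1 = i + 1 + k from fun i => by omega] using this
    have h3 : Tendsto (fun n => p k - p (n + k)) atTop (nhds (p k - 0)) :=
      tendsto_const_nhds.sub (htend.comp (tendsto_add_atTop_nat k))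
    rw [show p k - 0 = p k by ring] at h3
    exact tendsto_nhds_unique (by simpa [h2] using hsf.hasSum.tendsto_sum_nat) h3
  set S : ℝ := ∑' i : ℕ, (Real.sqrt (p (i + 1)) - Real.sqrt (p i)) ^ 2 with hSdef
  set u : ℝ := ∑' i, p (i + K) with hudef
  set v : ℝ := ∑ i ∈ Finset.range K, p i with hvdef
  set Sl : ℝ := ∑ i ∈ Finset.range K, (Real.sqrt (p (i + 1)) - Real.sqrt (p i)) ^ 2 with hSldef
  set Sr : ℝ := ∑' i, (Real.sqrt (p (i + K + 1)) - Real.sqrt (p (i + K))) ^ 2 with hSrdef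
  have hvu : v + u = 1 := (Summable.sum_add_tsum_nat_add K hsp).trans hsum
  have hS : S = Sl + Sr := (Summable.sum_add_tsum_nat_add (f := fun i : ℕ =>
    (Real.sqrt (p (i + 1)) - Real.sqrt (p i)) ^ 2) K hsd).symm
  have hPu : p K ≤ u := by
    simpa using Summable.le_tsum (hsshift K) 0 (fun j _ => hp _)
  have hv0 : 0 ≤ v := Finset.sum_nonneg fun i _ => hp i
  have hP1 : p K ≤ 1 := by linarith
  have hs2 : Summable (fun i => p (i + K + 1)) := (hsshift (K+1))
  have hu' : ∑' i, p (i + K + 1) = u - p K := by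
    have h := Summable.tsum_sub (hsshift K) hs2
    rw [htel K] at h
    linarith [h]
  -- right tail bound
  have hsum_r : p K * p K ≤ Sr + (p K)^2/2 * u + (p K)^2/2 * (u - p K) := by
    have hcr : ∀ i : ℕ, p K * (p (i + K) - p (i + K + 1)) ≤
        (Real.sqrt (p (i + K + 1)) - Real.sqrt (p (i + K))) ^ 2
          + ((p K)^2/2 * p (i + K) + (p K)^2/2 * p (i + K + 1)) := by
      intro i
      have h := stam_amgm (Real.sqrt (p (i + K))) (Real.sqrt (p (i + K + 1))) (p K)
      rw [hsq (i + K), hsq (i + K + 1)] at h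
      linarith [h]
    have hL : Summable (fun i => p K * (p (i + K) - p (i + K + 1))) :=
      ((hsshift K).sub hs2).mul_left _
    have hR1 : Summable (fun i : ℕ => (Real.sqrt (p (i + K + 1)) - Real.sqrt (p (i + K))) ^ 2) :=
      (summable_nat_add_iff K).mpr hsd
    have hR2 : Summable (fun i => (p K)^2/2 * p (i + K)) := (hsshift K).mul_left _
    have hR3 : Summable (fun i => (p K)^2/2 * p (i + K + 1)) := hs2.mul_left _
    calc p K * p K = ∑' i, p K * (p (i + K) - p (i + K + 1)) := by
          rw [tsum_mul_left, htel K]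
      _ ≤ ∑' i, ((Real.sqrt (p (i + K + 1)) - Real.sqrt (p (i + K))) ^ 2
            + ((p K)^2/2 * p (i + K) + (p K)^2/2 * p (i + K + 1))) :=
          Summable.tsum_le_tsum hcr hL (hR1.add (hR2.add hR3))
      _ = Sr + ((p K)^2/2 * u + (p K)^2/2 * (u - p K)) := by
          rw [Summable.tsum_add hR1 (hR2.add hR3), Summable.tsum_add hR2 hR3, tsum_mul_left, tsum_mul_left, hu']
      _ = Sr + (p K)^2/2 * u + (p K)^2/2 * (u - p K) := by ring
  -- left bound
  set t : ℝ := p K - p 0 with htdef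
  have ht0 : 0 ≤ t := by have := hmax 0; simp only [htdef]; linarith
  have htP : t ≤ p K := by have := hp 0; simp only [htdef]; linarith
  have htel_f : ∑ i ∈ Finset.range K, (p (i + 1) - p i) = p K - p 0 :=
    Finset.sum_range_sub p K
  have hv' : ∑ i ∈ Finset.range K, p (i + 1) = v - p 0 + p K := by
    have h := Finset.sum_sub_distrib (s := Finset.range K)
      (f := fun i => p (i + 1)) (g := fun i => p i)
    rw [htel_f] at h
    simp only [hvdef]
    linarith [h]
  have hsum_l : t * (p K - p 0) ≤ Sl + (t^2/2 * v + t^2/2 * (v - p 0 + p K)) := by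
    have hcl : ∀ i ∈ Finset.range K, t * (p (i + 1) - p i) ≤
        (Real.sqrt (p (i + 1)) - Real.sqrt (p i)) ^ 2
          + (t^2/2 * p i + t^2/2 * p (i + 1)) := by
      intro i _
      have h := stam_amgm (Real.sqrt (p i)) (Real.sqrt (p (i + 1))) (-t)
      rw [hsq i, hsq (i + 1), neg_sq] at h
      linarith [h]
    calc t * (p K - p 0) = ∑ i ∈ Finset.range K, t * (p (i + 1) - p i) := by
          rw [← Finset.mul_sum, htel_f]
      _ ≤ ∑ i ∈ Finset.range K, ((Real.sqrt (p (i + 1)) - Real.sqrt (p i)) ^ 2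
            + (t^2/2 * p i + t^2/2 * p (i + 1))) := Finset.sum_le_sum hcl
      _ = Sl + (t^2/2 * v + t^2/2 * (v - p 0 + p K)) := by
          rw [Finset.sum_add_distrib, Finset.sum_add_distrib, ← Finset.mul_sum, ← Finset.mul_sum,
            hv']
  -- core inequality
  have hSr_lb : (p K)^2 * v + (p K)^3/2 ≤ Sr := by
    have hu1 : u = 1 - v := by linarith
    rw [hu1] at hsum_r
    nlinarith [hsum_r]
  have hSl_lb : t^2 - t^2 * v - t^3/2 ≤ Sl := by
    have h1 : v - p 0 + p K = v + t := by simp only [htdef]; ring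
    rw [h1] at hsum_l
    have h2 : t * (p K - p 0) = t * t := by simp only [htdef]
    rw [h2] at hsum_l
    nlinarith [hsum_l]
  have hcore : 2 * (p K)^2 < 4 * S + 2 * p 0 - p 0 ^ 2 := by
    have hp0e : p 0 = p K - t := by simp only [htdef]; ring
    rw [hS, hp0e]
    exact stam_core (p K) t v Sl Sr hP0 hP1 ht0 htP hv0 hSl_lb hSr_lb
  -- entropy bound
  have hexp : (p K * p K)⁻¹ ≤ Real.exp (2 * (-∑' i : ℕ, p i * Real.log (p i))) := by
    have hHlog : ∑' i, p i * Real.log (p i) ≤ Real.log (p K) := by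
      have hterm : ∀ i, p i * Real.log (p i) ≤ p i * Real.log (p K) := by
        intro i
        rcases eq_or_lt_of_le (hp i) with h | h
        · simp [← h]
        · exact mul_le_mul_of_nonneg_left (Real.log_le_log h (hmax i)) (hp i)
      calc ∑' i, p i * Real.log (p i) ≤ ∑' i, p i * Real.log (p K) :=
            Summable.tsum_le_tsum hterm hent (hsp.mul_right _)
        _ = Real.log (p K) := by rw [tsum_mul_right, hsum, one_mul]
    calc (p K * p K)⁻¹ = Real.exp (2 * (-Real.log (p K))) := by
          rw [show (2:ℝ) * (-Real.log (p K)) = -(Real.log (p K) + Real.log (p K)) by ring,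
            Real.exp_neg, Real.exp_add, Real.exp_log hP0]
      _ ≤ _ := Real.exp_le_exp.mpr (by linarith)
  -- assemble
  have hXpos : 0 < 4 * S + 2 * p 0 - p 0 ^ 2 := by nlinarith [hcore, mul_pos hP0 hP0]
  have hPPinv : 0 < (p K * p K)⁻¹ := inv_pos.2 (mul_pos hP0 hP0)
  calc (1:ℝ) = 1/2 * ((p K * p K)⁻¹ * (2 * (p K)^2)) := by
        field_simp
    _ < 1/2 * ((p K * p K)⁻¹ * (4 * S + 2 * p 0 - p 0 ^ 2)) := by
        apply mul_lt_mul_of_pos_left (mul_lt_mul_of_pos_left hcore hPPinv) (by norm_num)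
    _ ≤ 1/2 * (Real.exp (2 * (-∑' i : ℕ, p i * Real.log (p i)))
          * (4 * S + 2 * p 0 - p 0 ^ 2)) := by
        apply mul_le_mul_of_nonneg_left (mul_le_mul_of_nonneg_right hexp hXpos.le) (by norm_num)
    _ = 1/2 * Real.exp (2 * (-∑' i : ℕ, p i * Real.log (p i)))
          * (4 * S + 2 * p 0 - p 0 ^ 2) := by ring
end

section
/- Near-tightness of the discrete Stam inequality: for the geometric pmf p_q(i) = q·(1−q)^i with 0 < q < 1, the product N_d(p_q)·I_d(p_q) tends to e² as q → 0⁺; hence any constant β with β·N_d(p)·I_d(p) > 1 for all admissible pmfs must satisfy β ≥ e^{−2}. -/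
/-!
For the geometric law the entropy and the Fisher information are explicit:
`N_d(p_q) = q⁻² · exp (-2 (1-q)/q · log (1-q))` and `I_d(p_q) = 4 (1 - √(1-q))²`.
Since `(1 - √(1-q)) (1 + √(1-q)) = q`, the factor `q⁻²` cancels and
`N_d(p_q) · I_d(p_q) = exp (-2 (1-q)/q · log (1-q)) · 4 / (1 + √(1-q))²`,
which tends to `e² · 1` because `log (1-q) / q → -1`. Feeding the geometric laws into an
inequality `β N_d I_d > 1` and letting `q → 0⁺` gives `β e² ≥ 1`.
-/

open Filter Real Topology

noncomputable section

def discreteEntropy (p : ℕ → ℝ) : ℝ := -∑' i, p i * log (p i)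

/-- The paper's `N_d(p)`. -/
def discreteEntropyPower (p : ℕ → ℝ) : ℝ := exp (2 * discreteEntropy p)

/-- The paper's `I_d(p)`. -/
def discreteFisherInfo (p : ℕ → ℝ) : ℝ := 4 * ∑' i, (√(p (i + 1)) - √(p i)) ^ 2

def geomPMF (q : ℝ) (i : ℕ) : ℝ := q * (1 - q) ^ i

end

section GeomPMF

variable {q : ℝ}

lemma geomPMF_nonneg (hq0 : 0 ≤ q) (hq1 : q ≤ 1) (i : ℕ) : 0 ≤ geomPMF q i :=
  mul_nonneg hq0 (pow_nonneg (sub_nonneg.2 hq1) i)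

lemma hasSum_geomPMF (hq0 : 0 < q) (hq1 : q ≤ 1) : HasSum (geomPMF q) 1 := by
  have := (hasSum_geometric_of_lt_one (sub_nonneg.2 hq1) (by linarith)).mul_left q
  rwa [sub_sub_cancel, mul_inv_cancel₀ hq0.ne'] at this

lemma tendsto_geomPMF_atTop (hq0 : 0 < q) (hq1 : q ≤ 1) :
    Tendsto (geomPMF q) atTop (𝓝 0) := by
  have := (tendsto_pow_atTop_nhds_zero_of_lt_one (sub_nonneg.2 hq1) (by linarith)).const_mul q
  rwa [mul_zero] at this

lemma geomPMF_mul_log (hq0 : 0 < q) (hq1 : q < 1) (i : ℕ) :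
    geomPMF q i * log (geomPMF q i)
      = log q * geomPMF q i + q * log (1 - q) * (i * (1 - q) ^ i) := by
  have h1q : 0 < 1 - q := by linarith
  rw [geomPMF, log_mul hq0.ne' (pow_pos h1q i).ne', log_pow]
  ring

lemma hasSum_geomPMF_mul_log (hq0 : 0 < q) (hq1 : q < 1) :
    HasSum (fun i => geomPMF q i * log (geomPMF q i)) (log q + (1 - q) / q * log (1 - q)) := by
  have hnorm : ‖1 - q‖ < 1 := by rw [norm_eq_abs, abs_lt]; constructor <;> linarith
  have := ((hasSum_geomPMF hq0 hq1.le).mul_left (log q)).add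
    ((hasSum_coe_mul_geometric_of_norm_lt_one hnorm).mul_left (q * log (1 - q)))
  have hval : log q * 1 + q * log (1 - q) * ((1 - q) / (1 - (1 - q)) ^ 2)
      = log q + (1 - q) / q * log (1 - q) := by
    rw [sub_sub_cancel]
    field_simp
  rw [funext (geomPMF_mul_log hq0 hq1), ← hval]
  exact this

lemma discreteEntropy_geomPMF (hq0 : 0 < q) (hq1 : q < 1) :
    discreteEntropy (geomPMF q) = -(log q + (1 - q) / q * log (1 - q)) := by
  rw [discreteEntropy, (hasSum_geomPMF_mul_log hq0 hq1).tsum_eq]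

lemma discreteEntropyPower_geomPMF (hq0 : 0 < q) (hq1 : q < 1) :
    discreteEntropyPower (geomPMF q) = (q ^ 2)⁻¹ * exp (-2 * ((1 - q) / q * log (1 - q))) := by
  rw [discreteEntropyPower, discreteEntropy_geomPMF hq0 hq1, ← exp_log (pow_pos hq0 2),
    ← exp_neg, ← exp_add, log_pow]
  push_cast
  ring_nf

lemma discreteFisherInfo_geomPMF (hq0 : 0 < q) (hq1 : q ≤ 1) :
    discreteFisherInfo (geomPMF q) = 4 * (1 - √(1 - q)) ^ 2 := by
  have h1q : 0 ≤ 1 - q := sub_nonneg.2 hq1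
  have hterm (i : ℕ) : (√(geomPMF q (i + 1)) - √(geomPMF q i)) ^ 2
      = (1 - √(1 - q)) ^ 2 * geomPMF q i := by
    have hshift : geomPMF q (i + 1) = geomPMF q i * (1 - q) := by rw [geomPMF, geomPMF]; ring
    rw [hshift, sqrt_mul (geomPMF_nonneg hq0.le hq1 i)]
    linear_combination (1 - √(1 - q)) ^ 2 * sq_sqrt (geomPMF_nonneg hq0.le hq1 i)
  rw [discreteFisherInfo, tsum_congr hterm, tsum_mul_left, (hasSum_geomPMF hq0 hq1).tsum_eq,
    mul_one]

end GeomPMF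

lemma one_sub_sqrt_one_sub_sq {q : ℝ} (hq1 : q ≤ 1) :
    (1 - √(1 - q)) ^ 2 = q ^ 2 / (1 + √(1 - q)) ^ 2 := by
  have hs := sq_sqrt (sub_nonneg.2 hq1)
  rw [eq_div_iff (by positivity), ← mul_pow]
  congr 1
  linear_combination -hs

lemma discreteEntropyPower_mul_discreteFisherInfo_geomPMF {q : ℝ} (hq0 : 0 < q) (hq1 : q < 1) :
    discreteEntropyPower (geomPMF q) * discreteFisherInfo (geomPMF q)
      = exp (-2 * ((1 - q) / q * log (1 - q))) * (4 / (1 + √(1 - q)) ^ 2) := by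
  rw [discreteEntropyPower_geomPMF hq0 hq1, discreteFisherInfo_geomPMF hq0 hq1.le,
    one_sub_sqrt_one_sub_sq hq1.le]
  field_simp

lemma tendsto_log_one_sub_div_self : Tendsto (fun q : ℝ => log (1 - q) / q) (𝓝[≠] 0) (𝓝 (-1)) := by
  have hderiv : HasDerivAt (fun q : ℝ => log (1 - q)) (-1) 0 := by
    simpa using ((hasDerivAt_id (0 : ℝ)).const_sub 1).log (by norm_num)
  refine (hasDerivAt_iff_tendsto_slope_zero.1 hderiv).congr fun q => ?_
  simp [div_eq_inv_mul]

lemma tendsto_one_sub_div_mul_log_one_sub :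
    Tendsto (fun q : ℝ => (1 - q) / q * log (1 - q)) (𝓝[≠] 0) (𝓝 (-1)) := by
  have h1 : Tendsto (fun q : ℝ => 1 - q) (𝓝[≠] 0) (𝓝 1) := by
    simpa using ((continuous_sub_left (1 : ℝ)).tendsto 0).mono_left nhdsWithin_le_nhds
  simpa [div_mul_eq_mul_div, mul_div_assoc] using h1.mul tendsto_log_one_sub_div_self

lemma tendsto_discreteEntropyPower_mul_discreteFisherInfo_geomPMF :
    Tendsto (fun q => discreteEntropyPower (geomPMF q) * discreteFisherInfo (geomPMF q))
      (𝓝[>] 0) (𝓝 (exp 2)) := by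
  have hexp : Tendsto (fun q : ℝ => exp (-2 * ((1 - q) / q * log (1 - q)))) (𝓝[>] 0)
      (𝓝 (exp 2)) := by
    have hexponent := (tendsto_one_sub_div_mul_log_one_sub.const_mul (-2)).mono_left
      (nhdsGT_le_nhdsNE 0)
    rw [show (-2 : ℝ) * -1 = 2 by norm_num] at hexponent
    exact (continuous_exp.tendsto 2).comp hexponent
  have hfrac : Tendsto (fun q : ℝ => 4 / (1 + √(1 - q)) ^ 2) (𝓝[>] 0) (𝓝 1) := by
    have hcont : ContinuousAt (fun q : ℝ => 4 / (1 + √(1 - q)) ^ 2) 0 :=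
      continuousAt_const.div (by fun_prop) (by norm_num)
    have := hcont.tendsto.mono_left (nhdsWithin_le_nhds (s := Set.Ioi 0))
    norm_num at this
    exact this
  refine (mul_one (exp 2) ▸ hexp.mul hfrac).congr' ?_
  filter_upwards [Ioo_mem_nhdsGT one_pos] with q ⟨hq0, hq1⟩
  exact (discreteEntropyPower_mul_discreteFisherInfo_geomPMF hq0 hq1).symm

lemma inv_le_of_tendsto_of_eventually_one_lt_mul {α : Type*} {l : Filter α} [l.NeBot]
    {f : α → ℝ} {c β : ℝ} (hc : 0 < c) (hf : Tendsto f l (𝓝 c))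
    (h : ∀ᶠ x in l, 1 < β * f x) : c⁻¹ ≤ β :=
  (inv_le_iff_one_le_mul₀' hc).2 <| by
    simpa [mul_comm] using ge_of_tendsto (hf.const_mul β) (h.mono fun _ => le_of_lt)

theorem stam_near_tight :
    Tendsto
      (fun q : ℝ =>
        Real.exp (2 * (-∑' i : ℕ, q * (1 - q) ^ i * Real.log (q * (1 - q) ^ i))) *
          (4 * ∑' i : ℕ, (Real.sqrt (q * (1 - q) ^ (i + 1)) - Real.sqrt (q * (1 - q) ^ i)) ^ 2))
      (nhdsWithin 0 (Set.Ioi 0)) (nhds (Real.exp 2)) ∧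
    ∀ β : ℝ,
      (∀ p : ℕ → ℝ, (∀ i, 0 ≤ p i) → ∑' i, p i = 1 → Tendsto p atTop (nhds 0) →
        Summable (fun i : ℕ => p i * Real.log (p i)) →
        β * (Real.exp (2 * (-∑' i : ℕ, p i * Real.log (p i))) *
          (4 * ∑' i : ℕ, (Real.sqrt (p (i + 1)) - Real.sqrt (p i)) ^ 2)) > 1) →
      Real.exp (-2) ≤ β := by
  have hlim := tendsto_discreteEntropyPower_mul_discreteFisherInfo_geomPMF
  refine ⟨hlim, fun β hβ => ?_⟩
  rw [exp_neg]
  refine inv_le_of_tendsto_of_eventually_one_lt_mul (exp_pos 2) hlim ?_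
  filter_upwards [Ioo_mem_nhdsGT one_pos] with q ⟨hq0, hq1⟩
  exact hβ (geomPMF q) (geomPMF_nonneg hq0.le hq1.le) (hasSum_geomPMF hq0 hq1.le).tsum_eq
    (tendsto_geomPMF_atTop hq0 hq1.le) (hasSum_geomPMF_mul_log hq0 hq1).summable
end

section
/- Tail Cauchy–Schwarz estimate: for a pmf p on ℕ with p(i) → 0, and m any index where the supremum ‖p‖_∞ is attained, one has 4·∑_{i=m}^∞ (√p(i+1) − √p(i))² > ‖p‖_∞². -/
open Filter Real

theorem tail_cauchy_schwarz (p : ℕ → ℝ) (hp : ∀ i, 0 ≤ p i)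
    (hsum : ∑' i, p i = 1) (htend : Tendsto p atTop (nhds 0))
    (m : ℕ) (hm : p m = ⨆ i, p i) :
    4 * ∑' i : ℕ, (Real.sqrt (p (m + i + 1)) - Real.sqrt (p (m + i))) ^ 2 >
      (⨆ i, p i) ^ 2 := by
  rw [← hm]
  -- summability of p
  have hsummable : Summable p := by
    by_contra h
    rw [tsum_eq_zero_of_not_summable h] at hsum
    norm_num at hsum
  have hle1 : ∀ i, p i ≤ 1 := fun i =>
    hsum ▸ Summable.le_tsum hsummable i (fun j _ => hp j)
  -- p m > 0
  have hbdd : BddAbove (Set.range p) := ⟨1, by rintro x ⟨i, rfl⟩; exact hle1 i⟩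
  have hpm_pos : 0 < p m := by
    rcases lt_or_eq_of_le (hp m) with h | h
    · exact h
    · exfalso
      have hz : ∀ i, p i = 0 := by
        intro i
        have h1 : p i ≤ p m := hm ▸ le_ciSup hbdd i
        have := hp i
        linarith
      have : (∑' i, p i) = 0 := by
        simp [tsum_congr hz]
      rw [this] at hsum; norm_num at hsum
  have hpm_le1 : p m ≤ 1 := hle1 m
  -- shifted sums
  have hs1 : Summable (fun i => p (m + i)) :=
    hsummable.comp_injective (add_right_injective m)
  have hs2 : Summable (fun i => p (m + i + 1)) := by
    have : (fun i : ℕ => p (m + i + 1)) = fun i : ℕ => p (m + (i + 1)) := by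
      funext i; ring_nf
    rw [this]
    exact (summable_nat_add_iff 1).mpr hs1
  have hT1 : ∑' i, p (m + i) ≤ 1 := by
    rw [← hsum]
    exact Summable.tsum_le_tsum_of_inj (fun i => m + i) (add_right_injective m)
      (fun c _ => hp c) (fun i => le_rfl) hs1 hsummable
  have hT2eq : ∑' i, p (m + i + 1) = (∑' i, p (m + i)) - p m := by
    have h0 := Summable.tsum_eq_zero_add hs1
    simp only [Nat.add_zero] at h0
    have h0' : (∑' i : ℕ, p (m + (i + 1))) = ∑' i : ℕ, p (m + i + 1) := rfl
    rw [h0'] at h0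
    linarith
  have hT2 : ∑' i, p (m + i + 1) ≤ 1 - p m := by
    rw [hT2eq]; linarith
  -- the difference sequence
  set a : ℕ → ℝ := fun i => Real.sqrt (p (m + i)) with ha
  have hsq : ∀ i, a i ^ 2 = p (m + i) := fun i => Real.sq_sqrt (hp _)
  have ha_nonneg : ∀ i, 0 ≤ a i := fun i => Real.sqrt_nonneg _
  set q : ℕ → ℝ := fun i => (a (i + 1) - a i) ^ 2 with hq
  have hq_eq : ∀ i, (Real.sqrt (p (m + i + 1)) - Real.sqrt (p (m + i))) ^ 2 = q i :=
    fun i => rfl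
  have hq_le : ∀ i, q i ≤ 2 * p (m + i) + 2 * p (m + i + 1) := by
    intro i
    have h1 := hsq i
    have h2' : a (i + 1) ^ 2 = p (m + i + 1) := hsq (i + 1)
    simp only [hq]
    nlinarith [sq_nonneg (a (i + 1) + a i)]
  have hq_nonneg : ∀ i, 0 ≤ q i := fun i => sq_nonneg _
  have hq_summable : Summable q := by
    apply Summable.of_nonneg_of_le hq_nonneg hq_le
    exact (hs1.mul_left 2).add (hs2.mul_left 2)
  set T : ℝ := ∑' i, q i with hT
  have hT_nonneg : 0 ≤ T := tsum_nonneg hq_nonneg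
  have hc_nonneg : (0:ℝ) ≤ 4 - 2 * p m := by linarith
  -- finite-stage inequality
  have hfin : ∀ n : ℕ, p m - p (m + n) ≤ Real.sqrt T * Real.sqrt (4 - 2 * p m) := by
    intro n
    have htel : p m - p (m + n) = ∑ i ∈ Finset.range n, (p (m + i) - p (m + i + 1)) := by
      have := Finset.sum_range_sub' (fun i => p (m + i)) n
      simp only [Nat.add_zero] at this
      exact this.symm
    rw [htel]
    have hstep : ∀ i, p (m + i) - p (m + i + 1) ≤ |a (i + 1) - a i| * (a i + a (i + 1)) := by
      intro i
      have h1 := hsq i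
      have h2' : a (i + 1) ^ 2 = p (m + i + 1) := hsq (i + 1)
      have habs : a i - a (i + 1) ≤ |a (i + 1) - a i| := by
        rw [abs_sub_comm]; exact le_abs_self _
      nlinarith [ha_nonneg i, ha_nonneg (i + 1), abs_nonneg (a (i + 1) - a i)]
    calc ∑ i ∈ Finset.range n, (p (m + i) - p (m + i + 1))
        ≤ ∑ i ∈ Finset.range n, |a (i + 1) - a i| * (a i + a (i + 1)) :=
          Finset.sum_le_sum (fun i _ => hstep i)
      _ ≤ Real.sqrt T * Real.sqrt (4 - 2 * p m) := by
          set S := ∑ i ∈ Finset.range n, |a (i + 1) - a i| * (a i + a (i + 1)) with hS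
          have hS_nonneg : 0 ≤ S :=
            Finset.sum_nonneg fun i _ => mul_nonneg (abs_nonneg _)
              (by have := ha_nonneg i; have := ha_nonneg (i + 1); linarith)
          have hcs := Finset.sum_mul_sq_le_sq_mul_sq (Finset.range n)
            (fun i => |a (i + 1) - a i|) (fun i => a i + a (i + 1))
          have hA : ∑ i ∈ Finset.range n, |a (i + 1) - a i| ^ 2 ≤ T := by
            have : ∀ i, |a (i + 1) - a i| ^ 2 = q i := fun i => sq_abs _
            simp only [this]
            exact Summable.sum_le_tsum _ (fun i _ => hq_nonneg i) hq_summable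
          have hB : ∑ i ∈ Finset.range n, (a i + a (i + 1)) ^ 2 ≤ 4 - 2 * p m := by
            have hb : ∀ i, (a i + a (i + 1)) ^ 2 ≤ 2 * p (m + i) + 2 * p (m + i + 1) := by
              intro i
              have h1 := hsq i
              have h2' : a (i + 1) ^ 2 = p (m + i + 1) := hsq (i + 1)
              nlinarith [sq_nonneg (a (i + 1) - a i)]
            calc ∑ i ∈ Finset.range n, (a i + a (i + 1)) ^ 2
                ≤ ∑ i ∈ Finset.range n, (2 * p (m + i) + 2 * p (m + i + 1)) :=
                  Finset.sum_le_sum fun i _ => hb i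
              _ ≤ ∑' i, (2 * p (m + i) + 2 * p (m + i + 1)) :=
                  Summable.sum_le_tsum _ (fun i _ => by
                    have := hp (m + i); have := hp (m + i + 1); linarith)
                    ((hs1.mul_left 2).add (hs2.mul_left 2))
              _ = 2 * (∑' i, p (m + i)) + 2 * (∑' i, p (m + i + 1)) := by
                  rw [Summable.tsum_add (hs1.mul_left 2) (hs2.mul_left 2),
                    tsum_mul_left, tsum_mul_left]
              _ ≤ 4 - 2 * p m := by linarith
          have hS2 : S ^ 2 ≤ T * (4 - 2 * p m) := by
            calc S ^ 2 ≤ (∑ i ∈ Finset.range n, |a (i + 1) - a i| ^ 2) *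
                (∑ i ∈ Finset.range n, (a i + a (i + 1)) ^ 2) := hcs
              _ ≤ T * (4 - 2 * p m) := by
                  apply mul_le_mul hA hB (Finset.sum_nonneg fun i _ => sq_nonneg _) hT_nonneg
          have : S = Real.sqrt (S ^ 2) := (Real.sqrt_sq hS_nonneg).symm
          rw [this, ← Real.sqrt_mul hT_nonneg]
          exact Real.sqrt_le_sqrt hS2
  -- pass to the limit
  have hlim : Tendsto (fun n => p m - p (m + n)) atTop (nhds (p m - 0)) := by
    apply Tendsto.sub tendsto_const_nhds
    exact htend.comp (by simpa [add_comm] using tendsto_add_atTop_nat m)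
  have hmain : p m ≤ Real.sqrt T * Real.sqrt (4 - 2 * p m) := by
    have := le_of_tendsto' hlim hfin
    simpa using this
  have hsq_main : p m ^ 2 ≤ T * (4 - 2 * p m) := by
    have h1 : p m ^ 2 ≤ (Real.sqrt T * Real.sqrt (4 - 2 * p m)) ^ 2 := by
      apply pow_le_pow_left₀ (hp m) hmain
    calc p m ^ 2 ≤ (Real.sqrt T * Real.sqrt (4 - 2 * p m)) ^ 2 := h1
      _ = T * (4 - 2 * p m) := by
          rw [mul_pow, Real.sq_sqrt hT_nonneg, Real.sq_sqrt hc_nonneg]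
  have hT_pos : 0 < T := by
    rcases lt_or_eq_of_le hT_nonneg with h | h
    · exact h
    · exfalso
      rw [← h] at hsq_main
      nlinarith
  have hgoal : p m ^ 2 < 4 * T := by
    have hexp : T * (4 - 2 * p m) = 4 * T - 2 * (p m * T) := by ring
    have hpt : 0 < p m * T := mul_pos hpm_pos hT_pos
    linarith
  have hTeq : (∑' i : ℕ, (Real.sqrt (p (m + i + 1)) - Real.sqrt (p (m + i))) ^ 2) = T :=
    (tsum_congr hq_eq).trans hT.symm
  rw [hTeq]
  exact hgoal
end
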